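/- arXiv:1112.5569 — 5 statements merged into one kernel-verified Lean document; each statement's English description precedes it below -/
import Mathlib

section
/- For every projection π ∈ M, every unitary v ∈ M, and every x ∈ M with 0 ≤ x ≤ π, the matrix p(x,v,π) is an orthogonal projection in N = M₂(M), i.e. p(x,v,π)² = p(x,v,π) and p(x,v,π)* = p(x,v,π). -/
set_option synthInstance.maxHeartbeats 1000000
set_option maxHeartbeats 1000000

/-!
Statement 1: For every projection `π ∈ M`, every unitary `v ∈ M`, and every `x ∈ M` with
`0 ≤ x ≤ π`, the matrix `p(x,v,π)` is an orthogonal projection in `N = M₂(M)`.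
Here `M` is a commutative von Neumann algebra, realized as a commutative
von Neumann algebra of operators on a complex Hilbert space `H`.
-/

variable {H : Type*} [NormedAddCommGroup H] [InnerProductSpace ℂ H] [CompleteSpace H]

/-- `p` is an orthogonal projection belonging to the von Neumann algebra `M`. -/
def VonNeumannAlgebra.IsProjectionIn (M : VonNeumannAlgebra H) (p : H →L[ℂ] H) : Prop :=
  p ∈ M ∧ p * p = p ∧ star p = p

/-- `v` is a unitary element of the von Neumann algebra `M`. -/
def VonNeumannAlgebra.IsUnitaryIn (M : VonNeumannAlgebra H) (v : H →L[ℂ] H) : Prop :=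
  v ∈ M ∧ star v * v = 1 ∧ v * star v = 1

/-- The matrix `p(x,v,π)` with entries `p₁₁ = x`, `p₁₂ = v·(x(π−x))^{1/2}`,
`p₂₁ = v*·(x(π−x))^{1/2}`, `p₂₂ = π−x`, where `(·)^{1/2}` is the positive square root
given by the continuous functional calculus. -/
noncomputable def pMat (x v π : H →L[ℂ] H) : Matrix (Fin 2) (Fin 2) (H →L[ℂ] H) :=
  !![x, v * CFC.sqrt (x * (π - x));
     star v * CFC.sqrt (x * (π - x)), π - x]

section Aux

variable {A : Type*} [CStarAlgebra A]

lemma aux_cfc_mem_elemental (f : ℂ → ℂ) (a : A) :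
    cfc f a ∈ StarAlgebra.elemental ℂ a := by
  refine cfc_cases (· ∈ StarAlgebra.elemental ℂ a) a f (zero_mem _) fun hf ha ↦ ?_
  rw [cfcHom_eq_of_isStarNormal (ha := ha)]
  exact SetLike.coe_mem _

lemma aux_commute_of_mem_elemental {a b y : A} (hy : y ∈ StarAlgebra.elemental ℂ a)
    (h : Commute b a) (h' : Commute b (star a)) : Commute b y := by
  induction hy using StarAlgebra.elemental.induction_on with
  | self => exact h
  | star_self => exact h'
  | algebraMap r => exact (Algebra.commutes r b).symm
  | add u hu v hv hu' hv' => exact hu'.add_right hv'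
  | mul u hu v hv hu' hv' => exact hu'.mul_right hv'
  | closure s hs hmem v hv =>
      have hclosed : IsClosed {u : A | Commute b u} := by
        have : {u : A | Commute b u} = {u : A | b * u = u * b} := rfl
        rw [this]
        exact isClosed_eq (continuous_const.mul continuous_id)
          (continuous_id.mul continuous_const)
      exact closure_minimal (fun u hu ↦ hmem u hu) hclosed hv

end Aux

section RingAux

variable {R : Type*} [Ring R]

lemma aux_e00 (x π v w s : R) (hvw : v * w = 1) (hsw : s * w = w * s)
    (hs2 : s * s = x - x * x) : x * x + (v * s) * (w * s) = x := by
  have h : (v * s) * (w * s) = x - x * x := by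
    rw [mul_assoc v s (w * s), ← mul_assoc s w s, hsw, mul_assoc w s s,
      ← mul_assoc v w (s * s), hvw, one_mul, hs2]
  rw [h]
  abel

lemma aux_e01 (x π v s : R) (hxv : x * v = v * x) (hsx : s * x = x * s)
    (hsπ : s * π = s) : x * (v * s) + (v * s) * (π - x) = v * s := by
  have h1 : x * (v * s) = v * (x * s) := by rw [← mul_assoc, hxv, mul_assoc]
  have h2 : (v * s) * (π - x) = v * (s - x * s) := by
    rw [mul_assoc, mul_sub s π x, hsπ, hsx]
  rw [h1, h2, ← mul_add]
  congr 1
  abel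

lemma aux_e10 (x π w s : R) (hxw : x * w = w * x) (hπw : π * w = w * π)
    (hsx : s * x = x * s) (hπs : π * s = s) :
    (w * s) * x + (π - x) * (w * s) = w * s := by
  have h1 : (w * s) * x = w * (x * s) := by rw [mul_assoc, hsx]
  have h2 : (π - x) * (w * s) = w * (s - x * s) := by
    rw [← mul_assoc, sub_mul π x w, hπw, hxw, ← mul_sub, mul_assoc, sub_mul π x s, hπs]
  rw [h1, h2, ← mul_add]
  congr 1
  abel

lemma aux_e11 (x π v w s : R) (hwv : w * v = 1) (hsv : s * v = v * s)
    (hs2 : s * s = x - x * x) (hππ : π * π = π) (hπx : π * x = x) (hxπ : x * π = x) :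
    (w * s) * (v * s) + (π - x) * (π - x) = π - x := by
  have h1 : (w * s) * (v * s) = x - x * x := by
    rw [mul_assoc w s (v * s), ← mul_assoc s v s, hsv, mul_assoc v s s,
      ← mul_assoc w v (s * s), hwv, one_mul, hs2]
  have h2 : (π - x) * (π - x) = π - x - x + x * x := by
    rw [mul_sub, sub_mul, sub_mul, hππ, hπx, hxπ]
    abel
  rw [h1, h2]
  abel

end RingAux

section AuxOp

variable {H : Type*} [NormedAddCommGroup H] [InnerProductSpace ℂ H] [CompleteSpace H]

lemma aux_commute_sqrt {a b : H →L[ℂ] H} (ha : 0 ≤ a) (h : Commute b a) :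
    Commute b (CFC.sqrt a) := by
  have hsa : IsSelfAdjoint a := .of_nonneg ha
  rw [CFC.sqrt_eq_cfc, cfc_nnreal_eq_real _ a ha, cfc_real_eq_complex _ hsa]
  exact aux_commute_of_mem_elemental (aux_cfc_mem_elemental _ a) h (by rw [hsa.star_eq]; exact h)

lemma aux_mul_nonneg_of_commute {a b : H →L[ℂ] H} (ha : 0 ≤ a) (hb : 0 ≤ b)
    (h : Commute a b) : 0 ≤ a * b := by
  have hs : Commute b (CFC.sqrt a) := aux_commute_sqrt ha h.symm
  have hsa : star (CFC.sqrt a) = CFC.sqrt a :=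
    (IsSelfAdjoint.of_nonneg (CFC.sqrt_nonneg (a := a))).star_eq
  calc (0 : H →L[ℂ] H) ≤ star (CFC.sqrt a) * b * CFC.sqrt a := star_left_conjugate_nonneg hb _
    _ = CFC.sqrt a * (b * CFC.sqrt a) := by rw [hsa, mul_assoc]
    _ = CFC.sqrt a * (CFC.sqrt a * b) := by rw [hs.eq]
    _ = CFC.sqrt a * CFC.sqrt a * b := by rw [mul_assoc]
    _ = a * b := by rw [CFC.sqrt_mul_sqrt_self a ha]

end AuxOp

theorem pMat_is_projection
    (M : VonNeumannAlgebra H)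
    (hcomm : ∀ a ∈ M, ∀ b ∈ M, a * b = b * a)
    (π v x : H →L[ℂ] H)
    (hπ : M.IsProjectionIn π) (hv : M.IsUnitaryIn v)
    (hxM : x ∈ M) (hx0 : 0 ≤ x) (hxπ : x ≤ π) :
    pMat x v π * pMat x v π = pMat x v π ∧ star (pMat x v π) = pMat x v π := by
  obtain ⟨hπM, hππ, hπstar⟩ := hπ
  obtain ⟨hvM, hvv, hvv'⟩ := hv
  have hsvM : star v ∈ M := star_mem hvM
  have hxstar : star x = x := (IsSelfAdjoint.of_nonneg hx0).star_eq
  have hxπc : x * π = π * x := hcomm x hxM π hπM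
  -- idempotence of 1 - π and related facts
  have hq2 : (1 - π) * (1 - π) = 1 - π := by
    rw [sub_mul, one_mul, mul_sub, mul_one, hππ, sub_self, sub_zero]
  have hqstar : star (1 - π) = 1 - π := by rw [star_sub, star_one, hπstar]
  -- x * π = x
  have hxπx : x * π = x := by
    have hc1 : x * (1 - π) = (1 - π) * x := by
      rw [mul_sub, sub_mul, mul_one, one_mul, hxπc]
    have h3 : (1 - π) * x * (1 - π) = x * (1 - π) := by
      rw [← hc1, mul_assoc, hq2]
    have h2 : (1 - π) * π * (1 - π) = 0 := by
      rw [sub_mul, one_mul, hππ, sub_self, zero_mul]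
    have h1 : (1 - π) * x * (1 - π) ≤ (1 - π) * π * (1 - π) := by
      have := star_left_conjugate_le_conjugate hxπ (1 - π)
      rwa [hqstar] at this
    have h5 : x * (1 - π) ≤ 0 := by rw [← h3, ← h2]; exact h1
    have h4 : 0 ≤ x * (1 - π) := by
      rw [← h3]
      have := star_left_conjugate_nonneg hx0 (1 - π)
      rwa [hqstar] at this
    have hq : x * (1 - π) = 0 := le_antisymm h5 h4
    rw [mul_sub, mul_one, sub_eq_zero] at hq
    exact hq.symm
  have hπxx : π * x = x := by rw [← hxπc, hxπx]
  -- positivity of x * (π - x)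
  have hπx0 : 0 ≤ π - x := sub_nonneg.mpr hxπ
  have hcax' : Commute x (π - x) := by
    have hπxcomm : Commute x π := hxπc
    exact (hπxcomm).sub_right (Commute.refl x)
  have ha0 : 0 ≤ x * (π - x) := aux_mul_nonneg_of_commute hx0 hπx0 hcax'
  -- the square root
  have hs0 : 0 ≤ CFC.sqrt (x * (π - x)) := CFC.sqrt_nonneg _
  have hsstar : star (CFC.sqrt (x * (π - x))) = CFC.sqrt (x * (π - x)) :=
    (IsSelfAdjoint.of_nonneg hs0).star_eq
  have hs2 : CFC.sqrt (x * (π - x)) * CFC.sqrt (x * (π - x)) = x - x * x := by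
    rw [CFC.sqrt_mul_sqrt_self _ ha0, mul_sub, hxπx]
  -- commutation of the square root with x, π, v, star v
  have hxπcomm : Commute x π := hxπc
  have hπxcomm : Commute π x := hxπc.symm
  have hvx : Commute v x := hcomm v hvM x hxM
  have hvπ : Commute v π := hcomm v hvM π hπM
  have hwx : Commute (star v) x := hcomm (star v) hsvM x hxM
  have hwπ : Commute (star v) π := hcomm (star v) hsvM π hπM
  have hcxa : Commute x (x * (π - x)) :=
    (Commute.refl x).mul_right ((hxπcomm).sub_right (Commute.refl x))
  have hcπa : Commute π (x * (π - x)) :=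
    hπxcomm.mul_right ((Commute.refl π).sub_right hπxcomm)
  have hcva : Commute v (x * (π - x)) := hvx.mul_right (hvπ.sub_right hvx)
  have hcwa : Commute (star v) (x * (π - x)) := hwx.mul_right (hwπ.sub_right hwx)
  have hcxs : Commute x (CFC.sqrt (x * (π - x))) := aux_commute_sqrt ha0 hcxa
  have hcπs : Commute π (CFC.sqrt (x * (π - x))) := aux_commute_sqrt ha0 hcπa
  have hcvs : Commute v (CFC.sqrt (x * (π - x))) := aux_commute_sqrt ha0 hcva
  have hcws : Commute (star v) (CFC.sqrt (x * (π - x))) := aux_commute_sqrt ha0 hcwa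
  set s := CFC.sqrt (x * (π - x)) with hs_def
  -- s * π = s
  have hsπ : s * π = s := by
    have hnn : 0 ≤ s * π := by
      have h := star_left_conjugate_nonneg hs0 π
      rw [hπstar] at h
      calc (0 : H →L[ℂ] H) ≤ π * s * π := h
        _ = s * π * π := by rw [hcπs.eq]
        _ = s * π := by rw [mul_assoc, hππ]
    have hmul : (s * π) * (s * π) = s * s := by
      calc (s * π) * (s * π) = s * ((π * s) * π) := by
            rw [mul_assoc s π (s * π), ← mul_assoc π s π]
        _ = s * ((s * π) * π) := by rw [hcπs.eq]
        _ = s * (s * (π * π)) := by rw [mul_assoc s π π]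
        _ = s * (s * π) := by rw [hππ]
        _ = (s * s) * π := by rw [mul_assoc]
        _ = (x - x * x) * π := by rw [hs2]
        _ = x * π - x * (x * π) := by rw [sub_mul, mul_assoc]
        _ = x - x * x := by rw [hxπx]
        _ = s * s := hs2.symm
    have h1 : CFC.sqrt (s * s) = s * π := CFC.sqrt_unique hmul hnn
    have h2 : CFC.sqrt (s * s) = s := CFC.sqrt_mul_self s hs0
    rw [← h1, h2]
  have hπs' : π * s = s := by rw [hcπs.eq]; exact hsπ
  refine ⟨?_, ?_⟩
  · -- idempotent
    show (!![x, v * s; star v * s, π - x] : Matrix (Fin 2) (Fin 2) (H →L[ℂ] H)) *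
        !![x, v * s; star v * s, π - x] = !![x, v * s; star v * s, π - x]
    rw [Matrix.mul_fin_two]
    rw [show x * x + v * s * (star v * s) = x from
      aux_e00 x π v (star v) s hvv' hcws.eq.symm hs2]
    rw [show x * (v * s) + v * s * (π - x) = v * s from
      aux_e01 x π v s hvx.eq.symm hcxs.eq.symm hsπ]
    rw [show star v * s * x + (π - x) * (star v * s) = star v * s from
      aux_e10 x π (star v) s hwx.eq.symm hwπ.eq.symm hcxs.eq.symm hπs']
    rw [show star v * s * (v * s) + (π - x) * (π - x) = π - x from
      aux_e11 x π v (star v) s hvv hcvs.eq.symm hs2 hππ hπxx hxπx]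
  · -- selfadjoint
    show star (!![x, v * s; star v * s, π - x] : Matrix (Fin 2) (Fin 2) (H →L[ℂ] H)) =
      !![x, v * s; star v * s, π - x]
    refine Matrix.ext fun i j => ?_
    rw [Matrix.star_apply]
    fin_cases i <;> fin_cases j
    · show star x = x
      exact hxstar
    · show star (star v * s) = v * s
      rw [star_mul, star_star, hsstar, hcvs.eq]
    · show star (v * s) = star v * s
      rw [star_mul, hsstar, ← hcws.eq]
    · show star (π - x) = π - x
      rw [star_sub, hπstar, hxstar]
end

section
/- Let π, ρ be projections in M, let v, w be unitaries in M, and let x, y ∈ M satisfy 0 ≤ x ≤ π, 0 ≤ y ≤ ρ, rp(x(π−x)) = π and rp(y(ρ−y)) = ρ. Then p(x,v,π)·p(y,w,ρ) = 0 if and only if y·πρ = (1−x)·πρ and w·πρ = −v·πρ. -/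
set_option synthInstance.maxHeartbeats 1000000
set_option maxHeartbeats 1000000

/-!
Statement 2: With `π, ρ` projections in `M`, `v, w` unitaries in `M`, `0 ≤ x ≤ π`,
`0 ≤ y ≤ ρ`, `rp(x(π−x)) = π`, `rp(y(ρ−y)) = ρ`, one has
`p(x,v,π)·p(y,w,ρ) = 0 ↔ y·πρ = (1−x)·πρ ∧ w·πρ = −v·πρ`.
-/

variable {H : Type*} [NormedAddCommGroup H] [InnerProductSpace ℂ H] [CompleteSpace H]

/-- `q` is the range projection of `a` in `M`: the least projection of `M`
(with respect to the Loewner order) satisfying `q * a = a`. -/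
def VonNeumannAlgebra.IsRangeProjectionOf (M : VonNeumannAlgebra H) (q a : H →L[ℂ] H) : Prop :=
  M.IsProjectionIn q ∧ q * a = a ∧
    ∀ q', M.IsProjectionIn q' → q' * a = a → q ≤ q'

namespace AuxPMat

section cstar
variable {A : Type*} [CStarAlgebra A] [PartialOrder A] [StarOrderedRing A]

lemma mul_proj_self {x π : A} (hx0 : 0 ≤ x) (hxπ : x ≤ π) (hπ2 : π * π = π) (hπs : star π = π) :
    x * π = x := by
  have hcs : star (1 - π) = 1 - π := by simp [hπs]
  have h1 : (1 - π) * x * (1 - π) ≤ (1 - π) * π * (1 - π) := by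
    simpa [hcs] using star_left_conjugate_le_conjugate hxπ (1 - π)
  have h2 : (1 - π) * π * (1 - π) = 0 := by
    simp [sub_mul, mul_sub, hπ2]
  have h3 : (0:A) ≤ (1 - π) * x * (1 - π) := by
    simpa [hcs] using star_left_conjugate_nonneg hx0 (1 - π)
  have h4 : (1 - π) * x * (1 - π) = 0 := le_antisymm (h2 ▸ h1) h3
  set r := CFC.sqrt x with hr
  have hrr : r * r = x := CFC.sqrt_mul_sqrt_self x hx0
  have hrs : star r = r := (IsSelfAdjoint.of_nonneg (CFC.sqrt_nonneg (a := x))).star_eq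
  have h5 : star (r * (1 - π)) * (r * (1 - π)) = 0 := by
    rw [star_mul, hrs, hcs]
    calc (1 - π) * r * (r * (1 - π)) = (1 - π) * (r * r) * (1 - π) := by
          rw [mul_assoc, ← mul_assoc r r, ← mul_assoc]
    _ = 0 := by rw [hrr]; exact h4
  have h6 : r * (1 - π) = 0 := (CStarRing.star_mul_self_eq_zero_iff _).mp h5
  have h7 : x * (1 - π) = 0 := by
    calc x * (1 - π) = r * (r * (1 - π)) := by rw [← mul_assoc, hrr]
    _ = 0 := by rw [h6, mul_zero]
  rw [mul_sub, mul_one, sub_eq_zero] at h7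
  exact h7.symm

lemma mul_nonneg_of_commute {a b : A} (ha : 0 ≤ a) (hb : 0 ≤ b)
    (hcomm : Commute (CFC.sqrt a) b) : 0 ≤ a * b := by
  have hrr : CFC.sqrt a * CFC.sqrt a = a := CFC.sqrt_mul_sqrt_self a ha
  have hrs : star (CFC.sqrt a) = CFC.sqrt a :=
    (IsSelfAdjoint.of_nonneg (CFC.sqrt_nonneg (a := a))).star_eq
  have key : a * b = star (CFC.sqrt a) * b * CFC.sqrt a := by
    conv_lhs => rw [← hrr, mul_assoc, hcomm.eq, ← mul_assoc]
    rw [hrs]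
  rw [key]
  exact star_left_conjugate_nonneg hb _

lemma proj_le_absorb {p q : A} (hp2 : p * p = p) (hps : star p = p)
    (hq2 : q * q = q) (hqs : star q = q) (hle : p ≤ q) : p * q = p ∧ q * p = p := by
  have hp0 : 0 ≤ p := by
    calc (0:A) ≤ star p * p := star_mul_self_nonneg p
    _ = p := by rw [hps, hp2]
  have hcs : star (1 - q) = 1 - q := by simp [hqs]
  have h1 : (1 - q) * p * (1 - q) ≤ (1 - q) * q * (1 - q) := by
    simpa [hcs] using star_left_conjugate_le_conjugate hle (1 - q)
  have h2 : (1 - q) * q * (1 - q) = 0 := by simp [sub_mul, mul_sub, hq2]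
  have h3 : (0:A) ≤ (1 - q) * p * (1 - q) := by
    simpa [hcs] using star_left_conjugate_nonneg hp0 (1 - q)
  have h4 : (1 - q) * p * (1 - q) = 0 := le_antisymm (h2 ▸ h1) h3
  have h5 : star (p * (1 - q)) * (p * (1 - q)) = 0 := by
    rw [star_mul, hcs, hps]
    calc (1 - q) * p * (p * (1 - q)) = (1 - q) * (p * p) * (1 - q) := by
          rw [mul_assoc, ← mul_assoc p p, ← mul_assoc]
    _ = 0 := by rw [hp2]; exact h4
  have h6 : p * (1 - q) = 0 := (CStarRing.star_mul_self_eq_zero_iff _).mp h5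
  rw [mul_sub, mul_one, sub_eq_zero] at h6
  refine ⟨h6.symm, ?_⟩
  have := congrArg star h6
  rw [star_mul, hps, hqs] at this
  exact this.symm

/-- if `s` is selfadjoint, `s * s` is absorbed by the selfadjoint idempotent `π`, and
`s` commutes with `π`, then `s * π = s`. -/
lemma absorb_of_sq {s π : A} (hss : star s = s) (hπs : star π = π)
    (h : (s * s) * π = s * s) (hcm : π * s = s * π) : s * π = s := by
  have hcs : star (1 - π) = 1 - π := by simp [hπs]
  have h5 : star (s * (1 - π)) * (s * (1 - π)) = 0 := by
    rw [star_mul, hcs, hss]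
    calc (1 - π) * s * (s * (1 - π)) = (1 - π) * ((s * s) * (1 - π)) := by
          rw [mul_assoc, ← mul_assoc s s]
    _ = 0 := by
          have : (s * s) * (1 - π) = 0 := by rw [mul_sub, mul_one, h, sub_self]
          rw [this, mul_zero]
  have h6 : s * (1 - π) = 0 := (CStarRing.star_mul_self_eq_zero_iff _).mp h5
  rw [mul_sub, mul_one, sub_eq_zero] at h6
  exact h6.symm

end cstar

lemma centralizer_isClosed (S : Set (H →L[ℂ] H)) : IsClosed (Set.centralizer S) := by
  have : Set.centralizer S = ⋂ m ∈ S, {c : H →L[ℂ] H | m * c = c * m} := by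
    ext c; simp [Set.centralizer, Set.mem_iInter]
  rw [this]
  refine isClosed_biInter fun m _ => ?_
  exact isClosed_eq (by fun_prop) (by fun_prop)

lemma vN_isClosed (M : VonNeumannAlgebra H) : IsClosed (M : Set (H →L[ℂ] H)) := by
  rw [← M.centralizer_centralizer]
  exact centralizer_isClosed _

lemma cfc_complex_mem {M : VonNeumannAlgebra H} {z : H →L[ℂ] H} (hz : z ∈ M) (f : ℂ → ℂ) :
    cfc f z ∈ M := by
  refine cfc_cases (· ∈ M) z f (zero_mem M.toStarSubalgebra) fun hf hz' => ?_
  rw [cfcHom_eq_of_isStarNormal]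
  exact StarAlgebra.elemental.le_of_mem (vN_isClosed M) hz (SetLike.coe_mem _)

lemma sqrt_mem {M : VonNeumannAlgebra H} {z : H →L[ℂ] H} (hz : z ∈ M) (hz0 : 0 ≤ z) :
    CFC.sqrt z ∈ M := by
  rw [CFC.sqrt_eq_cfc, cfc_nnreal_eq_real _ _ hz0,
    cfc_real_eq_complex _ (IsSelfAdjoint.of_nonneg hz0)]
  exact cfc_complex_mem hz _

lemma ann_of_rangeProjection {M : VonNeumannAlgebra H} {q a m : H →L[ℂ] H}
    (hq : M.IsRangeProjectionOf q a) (haM : a ∈ M) (hma : m * a = 0) : m * q = 0 := by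
  classical
  set K : Submodule ℂ H := (LinearMap.range (a : H →ₗ[ℂ] H)).topologicalClosure with hK
  have hKclosed : IsClosed (K : Set H) := Submodule.isClosed_topologicalClosure _
  haveI : CompleteSpace K := hKclosed.completeSpace_coe
  set P : H →L[ℂ] H := K.subtypeL ∘L K.orthogonalProjectionOnto with hPdef
  have hPmem : ∀ ξ : H, P ξ ∈ K := fun ξ => SetLike.coe_mem _
  have hPfix : ∀ ξ ∈ K, P ξ = ξ := fun ξ hξ => Submodule.starProjection_eq_self_iff.mpr hξ
  have hP2 : P * P = P := by
    ext ξ; exact hPfix _ (hPmem ξ)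
  have hPsa : star P = P := (isSelfAdjoint_starProjection K).star_eq
  have hrange : ∀ ξ : H, a ξ ∈ K := fun ξ =>
    (LinearMap.range (a : H →ₗ[ℂ] H)).le_topologicalClosure (LinearMap.mem_range_self _ ξ)
  have hPa : P * a = a := by ext ξ; exact hPfix _ (hrange ξ)
  have half : ∀ T : H →L[ℂ] H, (∀ ξ ∈ K, T ξ ∈ K) → T * P = P * (T * P) := by
    intro T hT
    ext ξ
    exact (hPfix _ (hT _ (hPmem ξ))).symm
  have comm_of_inv : ∀ T : H →L[ℂ] H, (∀ ξ ∈ K, T ξ ∈ K) → (∀ ξ ∈ K, star T ξ ∈ K) →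
      T * P = P * T := by
    intro T hT hT'
    have h1 : T * P = P * (T * P) := half T hT
    have h2 : star T * P = P * (star T * P) := half (star T) hT'
    have h3 := congrArg star h2
    simp only [star_mul, star_star, hPsa] at h3
    rw [h1, h3]
    noncomm_ring
  have hPM : P ∈ M := by
    have := M.centralizer_centralizer
    rw [← SetLike.mem_coe, ← this]
    intro T hT
    have hTa : a * T = T * a := hT a haM
    have hinv : ∀ S : H →L[ℂ] H, a * S = S * a → ∀ ξ ∈ K, S ξ ∈ K := by
      intro S hSa ξ hξ
      have h1 : (S '' (LinearMap.range (a : H →ₗ[ℂ] H) : Set H)) ⊆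
          (LinearMap.range (a : H →ₗ[ℂ] H) : Set H) := by
        rintro _ ⟨_, ⟨η, rfl⟩, rfl⟩
        refine ⟨S η, ?_⟩
        have := congrFun (congrArg (DFunLike.coe) hSa) η
        simpa using this
      have h2 : ξ ∈ closure ((LinearMap.range (a : H →ₗ[ℂ] H) : Set H)) := hξ
      have h3 : S ξ ∈ closure (S '' ((LinearMap.range (a : H →ₗ[ℂ] H) : Set H))) :=
        image_closure_subset_closure_image S.continuous (Set.mem_image_of_mem _ h2)
      exact closure_mono h1 h3
    have hstar : a * star T = star T * a := by
      have h := hT (star a) (star_mem haM)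
      have := congrArg star h
      simpa [star_mul] using this.symm
    have hc := comm_of_inv T (hinv T hTa) (by
      intro ξ hξ
      exact hinv (star T) hstar ξ hξ)
    exact hc
  have hqP : q ≤ P := hq.2.2 P ⟨hPM, hP2, hPsa⟩ hPa
  have hmP : m * P = 0 := by
    ext ξ
    have h0 : ∀ η ∈ (LinearMap.range (a : H →ₗ[ℂ] H) : Set H), m η = 0 := by
      rintro _ ⟨η, rfl⟩
      have := congrFun (congrArg (DFunLike.coe) hma) η
      simpa using this
    have hcl : ∀ η ∈ K, m η = 0 := by
      intro η hη
      have : (K : Set H) ⊆ {ζ | m ζ = 0} := by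
        refine closure_minimal h0 ?_
        exact isClosed_eq m.continuous continuous_const
      exact this hη
    simpa using hcl _ (hPmem ξ)
  have hq2 := hq.1.2.1
  have hqs := hq.1.2.2
  obtain ⟨-, hPq⟩ := proj_le_absorb hq2 hqs hP2 hPsa hqP
  calc m * q = m * (P * q) := by rw [hPq]
  _ = (m * P) * q := by rw [mul_assoc]
  _ = 0 := by rw [hmP, zero_mul]

end AuxPMat

theorem pMat_mul_pMat_eq_zero_iff
    (M : VonNeumannAlgebra H)
    (hcomm : ∀ a ∈ M, ∀ b ∈ M, a * b = b * a)
    (π ρ v w x y : H →L[ℂ] H)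
    (hπ : M.IsProjectionIn π) (hρ : M.IsProjectionIn ρ)
    (hv : M.IsUnitaryIn v) (hw : M.IsUnitaryIn w)
    (hxM : x ∈ M) (hx0 : 0 ≤ x) (hxπ : x ≤ π)
    (hyM : y ∈ M) (hy0 : 0 ≤ y) (hyρ : y ≤ ρ)
    (hrpx : M.IsRangeProjectionOf π (x * (π - x)))
    (hrpy : M.IsRangeProjectionOf ρ (y * (ρ - y))) :
    pMat x v π * pMat y w ρ = 0 ↔
      y * (π * ρ) = (1 - x) * (π * ρ) ∧ w * (π * ρ) = -(v * (π * ρ)) := by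
  classical
  obtain ⟨hπM, hπ2, hπs⟩ := hπ
  obtain ⟨hρM, hρ2, hρs⟩ := hρ
  obtain ⟨hvM, hvsv, hvvs⟩ := hv
  obtain ⟨hwM, hwsw, hwws⟩ := hw
  set s := CFC.sqrt (x * (π - x)) with hs
  set t := CFC.sqrt (y * (ρ - y)) with ht
  -- basic membership and positivity facts
  have hπxM : π - x ∈ M := sub_mem hπM hxM
  have hρyM : ρ - y ∈ M := sub_mem hρM hyM
  have hπx0 : 0 ≤ π - x := sub_nonneg.mpr hxπ
  have hρy0 : 0 ≤ ρ - y := sub_nonneg.mpr hyρ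
  have hzxM : x * (π - x) ∈ M := mul_mem hxM hπxM
  have hzyM : y * (ρ - y) ∈ M := mul_mem hyM hρyM
  have hzx0 : 0 ≤ x * (π - x) :=
    AuxPMat.mul_nonneg_of_commute hx0 hπx0 (hcomm _ (AuxPMat.sqrt_mem hxM hx0) _ hπxM)
  have hzy0 : 0 ≤ y * (ρ - y) :=
    AuxPMat.mul_nonneg_of_commute hy0 hρy0 (hcomm _ (AuxPMat.sqrt_mem hyM hy0) _ hρyM)
  have hsM : s ∈ M := AuxPMat.sqrt_mem hzxM hzx0
  have htM : t ∈ M := AuxPMat.sqrt_mem hzyM hzy0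
  have hs0 : 0 ≤ s := CFC.sqrt_nonneg _
  have ht0 : 0 ≤ t := CFC.sqrt_nonneg _
  have hssq : s * s = x * (π - x) := CFC.sqrt_mul_sqrt_self _ hzx0
  have htsq : t * t = y * (ρ - y) := CFC.sqrt_mul_sqrt_self _ hzy0
  have hssa : star s = s := (IsSelfAdjoint.of_nonneg hs0).star_eq
  have htsa : star t = t := (IsSelfAdjoint.of_nonneg ht0).star_eq
  have hxsa : star x = x := (IsSelfAdjoint.of_nonneg hx0).star_eq
  have hysa : star y = y := (IsSelfAdjoint.of_nonneg hy0).star_eq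
  have hxπeq : x * π = x := AuxPMat.mul_proj_self hx0 hxπ hπ2 hπs
  have hyρeq : y * ρ = y := AuxPMat.mul_proj_self hy0 hyρ hρ2 hρs
  -- the commutative ring M
  letI : CommRing ↥M.toStarSubalgebra :=
    { (inferInstance : Ring ↥M.toStarSubalgebra) with
      mul_comm := fun a b => Subtype.ext (hcomm a a.2 b b.2) }
  set Xm : ↥M.toStarSubalgebra := ⟨x, hxM⟩ with hXm
  set Ym : ↥M.toStarSubalgebra := ⟨y, hyM⟩ with hYm
  set Pm : ↥M.toStarSubalgebra := ⟨π, hπM⟩ with hPm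
  set Rm : ↥M.toStarSubalgebra := ⟨ρ, hρM⟩ with hRm
  set Vm : ↥M.toStarSubalgebra := ⟨v, hvM⟩ with hVm
  set Wm : ↥M.toStarSubalgebra := ⟨w, hwM⟩ with hWm
  set Vsm : ↥M.toStarSubalgebra := ⟨star v, star_mem hvM⟩ with hVsm
  set Wsm : ↥M.toStarSubalgebra := ⟨star w, star_mem hwM⟩ with hWsm
  set Sm : ↥M.toStarSubalgebra := ⟨s, hsM⟩ with hSm
  set Tm : ↥M.toStarSubalgebra := ⟨t, htM⟩ with hTm
  have hVV : Vm * Vsm = 1 := Subtype.ext hvvs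
  have hWW : Wm * Wsm = 1 := Subtype.ext hwws
  have hSS : Sm * Sm = Xm * (Pm - Xm) := Subtype.ext hssq
  have hTT : Tm * Tm = Ym * (Rm - Ym) := Subtype.ext htsq
  have hPP : Pm * Pm = Pm := Subtype.ext hπ2
  have hRR : Rm * Rm = Rm := Subtype.ext hρ2
  have hXP : Xm * Pm = Xm := Subtype.ext hxπeq
  have hYR : Ym * Rm = Ym := Subtype.ext hyρeq
  -- absorption for the square roots
  have mSSP : (Sm * Sm) * Pm = Sm * Sm := by
    linear_combination (Pm - 1) * hSS + Xm * hPP - Xm * hXP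
  have hsπeq : s * π = s :=
    AuxPMat.absorb_of_sq hssa hπs (congrArg Subtype.val mSSP) (hcomm _ hπM _ hsM)
  have mTTR : (Tm * Tm) * Rm = Tm * Tm := by
    linear_combination (Rm - 1) * hTT + Ym * hRR - Ym * hYR
  have htρeq : t * ρ = t :=
    AuxPMat.absorb_of_sq htsa hρs (congrArg Subtype.val mTTR) (hcomm _ hρM _ htM)
  have hSP : Sm * Pm = Sm := Subtype.ext hsπeq
  have hTR : Tm * Rm = Tm := Subtype.ext htρeq
  -- support lemmas
  have xySup : Xm * Ym = (Xm * Ym) * (Pm * Rm) := by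
    linear_combination -Xm * hYR - (Ym * Rm) * hXP
  have sTsup : Sm * Tm = (Sm * Tm) * (Pm * Rm) := by
    linear_combination -Sm * hTR - (Tm * Rm) * hSP
  constructor
  · -- forward direction
    intro hmul
    rw [pMat, pMat, Matrix.mul_fin_two, ← Matrix.ext_iff] at hmul
    rw [← hs, ← ht] at hmul
    have hE11 : x * y + v * s * (star w * t) = 0 := by simpa using hmul 0 0
    have hE22 : star v * s * (w * t) + (π - x) * (ρ - y) = 0 := by simpa using hmul 1 1
    -- star versions
    have hE11s : y * x + t * w * (s * star v) = 0 := by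
      have h := congrArg star hE11
      simpa [star_add, star_mul, hssa, htsa, hxsa, hysa, mul_assoc] using h
    have hE22s : t * star w * (s * v) + (ρ - y) * (π - x) = 0 := by
      have h := congrArg star hE22
      simpa [star_add, star_mul, star_sub, hssa, htsa, hπs, hρs, hxsa, hysa, mul_assoc] using h
    -- lift them to M
    have mE11 : Xm * Ym + Vm * Sm * (Wsm * Tm) = 0 := Subtype.ext hE11
    have mE11s : Ym * Xm + Tm * Wm * (Sm * Vsm) = 0 := Subtype.ext hE11s
    have mE22s : Tm * Wsm * (Sm * Vm) + (Rm - Ym) * (Pm - Xm) = 0 := Subtype.ext hE22s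
    have d1 : Xm * Ym = -(Vm * Wsm * (Sm * Tm)) := by linear_combination mE11
    have d2 : Xm * Ym = -(Wm * Vsm * (Sm * Tm)) := by linear_combination mE11s
    have d4 : (Pm - Xm) * (Rm - Ym) = -(Vm * Wsm * (Sm * Tm)) := by linear_combination mE22s
    have dcd : Xm * Ym = (Pm - Xm) * (Rm - Ym) := d1.trans d4.symm
    have dsq : (Xm * Ym) * (Xm * Ym) = (Sm * Tm) * (Sm * Tm) := by
      calc (Xm * Ym) * (Xm * Ym)
          = (-(Vm * Wsm * (Sm * Tm))) * (-(Wm * Vsm * (Sm * Tm))) := by rw [← d1, ← d2]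
        _ = (Vm * Vsm) * (Wm * Wsm) * ((Sm * Tm) * (Sm * Tm)) := by ring
        _ = (Sm * Tm) * (Sm * Tm) := by rw [hVV, hWW]; ring
    have hsq : (x * y) * (x * y) = (s * t) * (s * t) := congrArg Subtype.val dsq
    have hxy0 : 0 ≤ x * y :=
      AuxPMat.mul_nonneg_of_commute hx0 hy0 (hcomm _ (AuxPMat.sqrt_mem hxM hx0) _ hyM)
    have hst0 : 0 ≤ s * t :=
      AuxPMat.mul_nonneg_of_commute hs0 ht0 (hcomm _ (AuxPMat.sqrt_mem hsM hs0) _ htM)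
    have hstxy : s * t = x * y := by
      calc s * t = CFC.sqrt ((s * t) * (s * t)) := (CFC.sqrt_mul_self _ hst0).symm
      _ = CFC.sqrt ((x * y) * (x * y)) := by rw [hsq]
      _ = x * y := CFC.sqrt_mul_self _ hxy0
    have hSTm : Sm * Tm = Xm * Ym := Subtype.ext hstxy
    constructor
    · -- first target
      have dT1 : Ym * (Pm * Rm) = (1 - Xm) * (Pm * Rm) := by
        linear_combination (Pm * Rm) * dcd + (Rm * Rm - Ym * Rm) * hPP + (Pm - Xm * Pm) * hRR
      exact congrArg Subtype.val dT1
    · -- second target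
      have dAnn : (Vm + Wm) * (Xm * Ym) = 0 := by
        linear_combination Wm * mE11 - Vm * (Sm * Tm) * hWW - Vm * hSTm
      have dAnn2 : ((Vm + Wm) * (Ym * (Rm - Ym))) * (Xm * (Pm - Xm)) = 0 := by
        linear_combination ((Pm - Xm) * (Rm - Ym)) * dAnn
      have hA2 : ((v + w) * (y * (ρ - y))) * (x * (π - x)) = 0 := congrArg Subtype.val dAnn2
      have hA3 : ((v + w) * (y * (ρ - y))) * π = 0 :=
        AuxPMat.ann_of_rangeProjection hrpx hzxM hA2
      have mA3 : ((Vm + Wm) * (Ym * (Rm - Ym))) * Pm = 0 := Subtype.ext hA3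
      have mA4 : ((Vm + Wm) * Pm) * (Ym * (Rm - Ym)) = 0 := by linear_combination mA3
      have hA4 : ((v + w) * π) * (y * (ρ - y)) = 0 := congrArg Subtype.val mA4
      have hA5 : ((v + w) * π) * ρ = 0 := AuxPMat.ann_of_rangeProjection hrpy hzyM hA4
      have mA5 : ((Vm + Wm) * Pm) * Rm = 0 := Subtype.ext hA5
      have dT2 : Wm * (Pm * Rm) = -(Vm * (Pm * Rm)) := by linear_combination mA5
      exact congrArg Subtype.val dT2
  · -- backward direction
    rintro ⟨hyπρ, hwπρ⟩
    have h1 : Ym * (Pm * Rm) = (1 - Xm) * (Pm * Rm) := Subtype.ext hyπρ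
    have h2 : Wm * (Pm * Rm) = -(Vm * (Pm * Rm)) := Subtype.ext hwπρ
    have h2s : Wsm * (Pm * Rm) = -(Vsm * (Pm * Rm)) := by
      linear_combination Vsm * Wsm * h2 - Vsm * (Pm * Rm) * hWW - Wsm * (Pm * Rm) * hVV
    -- corner facts
    have cP : Pm * (Pm * Rm) = Pm * Rm := by linear_combination Rm * hPP
    have cR : Rm * (Pm * Rm) = Pm * Rm := by linear_combination Pm * hRR
    have c2 : (Rm - Ym) * (Pm * Rm) = Xm * (Pm * Rm) := by linear_combination cR - h1
    have cPX : (Pm - Xm) * (Pm * Rm) = (1 - Xm) * (Pm * Rm) := by linear_combination cP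
    have hEE : (Pm * Rm) * (Pm * Rm) = Pm * Rm := by
      linear_combination (Rm * Rm) * hPP + Pm * hRR
    have c3 : (Tm * (Pm * Rm)) * (Tm * (Pm * Rm)) = ((1 - Xm) * (Pm * Rm)) * (Xm * (Pm * Rm)) := by
      calc (Tm * (Pm * Rm)) * (Tm * (Pm * Rm)) = (Ym * (Rm - Ym)) * ((Pm * Rm) * (Pm * Rm)) := by
            linear_combination ((Pm * Rm) * (Pm * Rm)) * hTT
      _ = (Ym * (Pm * Rm)) * ((Rm - Ym) * (Pm * Rm)) := by ring
      _ = ((1 - Xm) * (Pm * Rm)) * (Xm * (Pm * Rm)) := by rw [h1, c2]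
    have c4 : (Sm * (Pm * Rm)) * (Sm * (Pm * Rm)) = ((1 - Xm) * (Pm * Rm)) * (Xm * (Pm * Rm)) := by
      calc (Sm * (Pm * Rm)) * (Sm * (Pm * Rm)) = (Xm * (Pm - Xm)) * ((Pm * Rm) * (Pm * Rm)) := by
            linear_combination ((Pm * Rm) * (Pm * Rm)) * hSS
      _ = (Xm * (Pm * Rm)) * ((Pm - Xm) * (Pm * Rm)) := by ring
      _ = (Xm * (Pm * Rm)) * ((1 - Xm) * (Pm * Rm)) := by rw [cPX]
      _ = ((1 - Xm) * (Pm * Rm)) * (Xm * (Pm * Rm)) := by ring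
    have dsq2 := c3.trans c4.symm
    have hsq2 : (t * (π * ρ)) * (t * (π * ρ)) = (s * (π * ρ)) * (s * (π * ρ)) :=
      congrArg Subtype.val dsq2
    have hπρM : π * ρ ∈ M := mul_mem hπM hρM
    have hπρ0 : 0 ≤ π * ρ := by
      have : star (π * ρ) * (π * ρ) = π * ρ := by
        rw [star_mul, hπs, hρs]
        exact congrArg Subtype.val (show (Rm * Pm) * (Pm * Rm) = Pm * Rm by
          linear_combination (Rm * Rm) * hPP + Pm * hRR)
      rw [← this]
      exact star_mul_self_nonneg _
    have hte0 : 0 ≤ t * (π * ρ) :=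
      AuxPMat.mul_nonneg_of_commute ht0 hπρ0 (hcomm _ (AuxPMat.sqrt_mem htM ht0) _ hπρM)
    have hse0 : 0 ≤ s * (π * ρ) :=
      AuxPMat.mul_nonneg_of_commute hs0 hπρ0 (hcomm _ (AuxPMat.sqrt_mem hsM hs0) _ hπρM)
    have hte : t * (π * ρ) = s * (π * ρ) := by
      calc t * (π * ρ) = CFC.sqrt ((t * (π * ρ)) * (t * (π * ρ))) :=
            (CFC.sqrt_mul_self _ hte0).symm
      _ = CFC.sqrt ((s * (π * ρ)) * (s * (π * ρ))) := by rw [hsq2]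
      _ = s * (π * ρ) := CFC.sqrt_mul_self _ hse0
    have h3 : Tm * (Pm * Rm) = Sm * (Pm * Rm) := Subtype.ext hte
    -- the four entries
    have rXY : Xm * Ym = (Xm - Xm * Xm) * (Pm * Rm) := by
      linear_combination xySup + Xm * h1
    have rST : Sm * Tm = (Xm - Xm * Xm) * (Pm * Rm) := by
      linear_combination sTsup + Sm * h3 + (Pm * Rm) * hSS + (Pm * Rm) * hXP
    have G00 : Xm * Ym + Vm * Sm * (Wsm * Tm) = 0 := by
      linear_combination rXY + (Vm * Wsm) * rST + (Xm - Xm * Xm) * Vm * h2s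
        - ((Xm - Xm * Xm) * (Pm * Rm)) * hVV
    have supXT : Xm * Tm = (Xm * Tm) * (Pm * Rm) := by
      linear_combination -Xm * hTR - (Tm * Rm) * hXP
    have supSY : Sm * Ym = (Sm * Ym) * (Pm * Rm) := by
      linear_combination -Sm * hYR - (Ym * Rm) * hSP
    have supSRY : Sm * (Rm - Ym) = (Sm * (Rm - Ym)) * (Pm * Rm) := by
      linear_combination -(Rm - Ym) * hSP - (Sm * Pm) * hRR + (Sm * Pm) * hYR
    have supPXT : (Pm - Xm) * Tm = ((Pm - Xm) * Tm) * (Pm * Rm) := by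
      linear_combination -(Pm - Xm) * hTR - (Tm * Rm) * hPP + (Tm * Rm) * hXP
    have supPXRY : (Pm - Xm) * (Rm - Ym) = ((Pm - Xm) * (Rm - Ym)) * (Pm * Rm) := by
      linear_combination -(Rm - Ym) * hPP + (Rm - Ym) * hXP - ((Pm - Xm) * Pm) * hRR
        + ((Pm - Xm) * Pm) * hYR
    have G01 : Xm * (Wm * Tm) + Vm * Sm * (Rm - Ym) = 0 := by
      linear_combination Wm * supXT + Wm * Xm * h3 + (Xm * Sm) * h2 + Vm * supSRY
        + (Vm * Sm) * c2
    have G10 : Vsm * Sm * Ym + (Pm - Xm) * (Wsm * Tm) = 0 := by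
      linear_combination Vsm * supSY + Vsm * Sm * h1 + Wsm * supPXT + Wsm * (Pm - Xm) * h3
        + Sm * (Pm - Xm) * h2s - Vsm * Sm * cPX
    have G11 : Vsm * Sm * (Wm * Tm) + (Pm - Xm) * (Rm - Ym) = 0 := by
      linear_combination (Wm * Vsm) * rST + Vsm * (Xm - Xm * Xm) * h2
        - ((Xm - Xm * Xm) * (Pm * Rm)) * hVV + supPXRY + (Pm - Xm) * c2 + Xm * cPX
    rw [pMat, pMat, Matrix.mul_fin_two, ← hs, ← ht]
    have e00 : x * y + v * s * (star w * t) = 0 := congrArg Subtype.val G00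
    have e01 : x * (w * t) + v * s * (ρ - y) = 0 := congrArg Subtype.val G01
    have e10 : star v * s * y + (π - x) * (star w * t) = 0 := congrArg Subtype.val G10
    have e11 : star v * s * (w * t) + (π - x) * (ρ - y) = 0 := congrArg Subtype.val G11
    rw [e00, e01, e10, e11]
    ext i j
    fin_cases i <;> fin_cases j <;> simp
end

section
/- Let π, ρ be projections in M, let v, w be unitaries in M, and let x, y ∈ M satisfy 0 ≤ x ≤ π, 0 ≤ y ≤ ρ, rp(x(π−x)) = π and rp(y(ρ−y)) = ρ. If p(x,v,π)·p(y,w,ρ) = 0, then p(x,v,π) + p(y,w,ρ) = πρ⊕πρ + p(z,u,π∆ρ), where π∖ρ := π−πρ, π∆ρ := (π∖ρ)+(ρ∖π), z := x(π∖ρ)+y(ρ∖π), and u is any unitary in M satisfying u(π∖ρ) = v(π∖ρ) and u(ρ∖π) = w(ρ∖π). -/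
set_option synthInstance.maxHeartbeats 1000000
set_option maxHeartbeats 1000000

/-!
Statement 3: If `p(x,v,π)·p(y,w,ρ) = 0` then
`p(x,v,π) + p(y,w,ρ) = πρ⊕πρ + p(z,u,π∆ρ)`, where `π∖ρ = π−πρ`,
`π∆ρ = (π∖ρ)+(ρ∖π)`, `z = x(π∖ρ)+y(ρ∖π)`, and `u` is any unitary of `M`
with `u(π∖ρ) = v(π∖ρ)` and `u(ρ∖π) = w(ρ∖π)`.
-/

open scoped NNReal

section Aux

lemma isClosed_centralizer' {A : Type*} [NormedRing A] (s : Set A) :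
    IsClosed (Set.centralizer s) := by
  have : Set.centralizer s = ⋂ a ∈ s, {x | a * x = x * a} := by
    ext x; simp [Set.mem_centralizer_iff]
  rw [this]
  exact isClosed_biInter fun a _ => isClosed_eq (by continuity) (by continuity)

variable {A : Type*} [CStarAlgebra A] [PartialOrder A] [StarOrderedRing A]

lemma sqrt_mem_closed (S : StarSubalgebra ℂ A) (hS : IsClosed (S : Set A)) {a : A}
    (ha : 0 ≤ a) (haS : a ∈ S) : CFC.sqrt a ∈ S := by
  have hsa : IsSelfAdjoint a := .of_nonneg ha
  haveI : IsStarNormal a := hsa.isStarNormal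
  have h1 : CFC.sqrt a = cfcₙ NNReal.sqrt a := rfl
  rw [h1, cfcₙ_eq_cfc, cfc_nnreal_eq_real _ a ha, cfc_real_eq_complex _ hsa]
  generalize (fun x : ℂ => _ : ℂ → ℂ) = g
  by_cases hg : ContinuousOn g (spectrum ℂ a)
  · rw [cfc_apply g a ‹IsStarNormal a› hg, cfcHom_eq_of_isStarNormal]
    exact StarAlgebra.elemental.le_of_mem hS haS (SetLike.coe_mem _)
  · rw [cfc_apply_of_not_continuousOn a hg]; exact zero_mem S

lemma mul_nonneg_of_comm {a b : A} (ha : 0 ≤ a) (hb : 0 ≤ b)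
    (h : Commute (CFC.sqrt a) b) : 0 ≤ a * b := by
  have h1 : a * b = star (CFC.sqrt a) * b * CFC.sqrt a := by
    have hsa : star (CFC.sqrt a) = CFC.sqrt a :=
      (IsSelfAdjoint.of_nonneg (CFC.sqrt_nonneg _)).star_eq
    rw [hsa, mul_assoc, ← h.eq, ← mul_assoc, CFC.sqrt_mul_sqrt_self a ha]
  rw [h1]; exact star_left_conjugate_nonneg hb _

lemma eq_zero_of_selfadj_sq {k : A} (hk : star k = k) (h : k * k = 0) : k = 0 := by
  have : star k * k = 0 := by rw [hk, h]
  exact CStarRing.star_mul_self_eq_zero_iff _ |>.mp this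

end Aux

variable {H : Type*} [NormedAddCommGroup H] [InnerProductSpace ℂ H] [CompleteSpace H]

/-- The diagonal matrix `π₁ ⊕ π₂ = diag(π₁, π₂)`. -/
def diagMat (π₁ π₂ : H →L[ℂ] H) : Matrix (Fin 2) (Fin 2) (H →L[ℂ] H) :=
  !![π₁, 0; 0, π₂]

theorem pMat_add_pMat_of_orthogonal
    (M : VonNeumannAlgebra H)
    (hcomm : ∀ a ∈ M, ∀ b ∈ M, a * b = b * a)
    (π ρ v w x y u : H →L[ℂ] H)
    (hπ : M.IsProjectionIn π) (hρ : M.IsProjectionIn ρ)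
    (hv : M.IsUnitaryIn v) (hw : M.IsUnitaryIn w)
    (hxM : x ∈ M) (hx0 : 0 ≤ x) (hxπ : x ≤ π)
    (hyM : y ∈ M) (hy0 : 0 ≤ y) (hyρ : y ≤ ρ)
    (hrpx : M.IsRangeProjectionOf π (x * (π - x)))
    (hrpy : M.IsRangeProjectionOf ρ (y * (ρ - y)))
    (horth : pMat x v π * pMat y w ρ = 0)
    (hu : M.IsUnitaryIn u)
    (hu₁ : u * (π - π * ρ) = v * (π - π * ρ))
    (hu₂ : u * (ρ - π * ρ) = w * (ρ - π * ρ)) :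
    pMat x v π + pMat y w ρ =
      diagMat (π * ρ) (π * ρ) +
        pMat (x * (π - π * ρ) + y * (ρ - π * ρ)) u ((π - π * ρ) + (ρ - π * ρ)) := by
  obtain ⟨hπM, hππ, hπstar⟩ := hπ
  obtain ⟨hρM, hρρ, hρstar⟩ := hρ
  obtain ⟨hvM, hv1, hv2⟩ := hv
  obtain ⟨hwM, hw1, hw2⟩ := hw
  obtain ⟨huM, hu1, hu2⟩ := hu
  have hMclosed : IsClosed ((M.toStarSubalgebra : StarSubalgebra ℂ (H →L[ℂ] H)) :
      Set (H →L[ℂ] H)) := by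
    have : ((M.toStarSubalgebra : StarSubalgebra ℂ (H →L[ℂ] H)) : Set (H →L[ℂ] H)) =
        Set.centralizer (Set.centralizer (M : Set (H →L[ℂ] H))) := by
      rw [M.centralizer_centralizer]; rfl
    rw [this]; exact isClosed_centralizer' _
  -- basic selfadjointness
  have hxstar : star x = x := (IsSelfAdjoint.of_nonneg hx0).star_eq
  have hystar : star y = y := (IsSelfAdjoint.of_nonneg hy0).star_eq
  -- nonnegativity of x * (π - x)
  have hπx0 : 0 ≤ π - x := sub_nonneg.2 hxπ
  have hρy0 : 0 ≤ ρ - y := sub_nonneg.2 hyρ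
  have hsqrtxM : CFC.sqrt x ∈ M := sqrt_mem_closed _ hMclosed hx0 hxM
  have hsqrtyM : CFC.sqrt y ∈ M := sqrt_mem_closed _ hMclosed hy0 hyM
  have hxx0 : 0 ≤ x * (π - x) :=
    mul_nonneg_of_comm hx0 hπx0 (hcomm _ hsqrtxM _ (sub_mem hπM hxM))
  have hyy0 : 0 ≤ y * (ρ - y) :=
    mul_nonneg_of_comm hy0 hρy0 (hcomm _ hsqrtyM _ (sub_mem hρM hyM))
  set s := CFC.sqrt (x * (π - x)) with hs_def
  set t := CFC.sqrt (y * (ρ - y)) with ht_def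
  have hs0 : 0 ≤ s := CFC.sqrt_nonneg _
  have ht0 : 0 ≤ t := CFC.sqrt_nonneg _
  have hsstar : star s = s := (IsSelfAdjoint.of_nonneg hs0).star_eq
  have htstar : star t = t := (IsSelfAdjoint.of_nonneg ht0).star_eq
  have hsM : s ∈ M := sqrt_mem_closed _ hMclosed hxx0 (mul_mem hxM (sub_mem hπM hxM))
  have htM : t ∈ M := sqrt_mem_closed _ hMclosed hyy0 (mul_mem hyM (sub_mem hρM hyM))
  have hss : s * s = x * (π - x) := CFC.sqrt_mul_sqrt_self _ hxx0
  have htt : t * t = y * (ρ - y) := CFC.sqrt_mul_sqrt_self _ hyy0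
  -- x * π = x
  have hmulπ : ∀ z : H →L[ℂ] H, 0 ≤ z → z ≤ π → z * π = z := by
    intro z hz0 hzπ
    have h1 : π * (1 - π) = 0 := by rw [mul_sub, mul_one, hππ, sub_self]
    have h3 : star (1 - π) = 1 - π := by rw [star_sub, star_one, hπstar]
    have h4 : (1 - π) * z * (1 - π) ≤ 0 := by
      calc (1 - π) * z * (1 - π) = star (1 - π) * z * (1 - π) := by rw [h3]
      _ ≤ star (1 - π) * π * (1 - π) := star_left_conjugate_le_conjugate hzπ _
      _ = (1 - π) * (π * (1 - π)) := by rw [h3, mul_assoc]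
      _ = 0 := by rw [h1, mul_zero]
    have h5 : 0 ≤ (1 - π) * z * (1 - π) := by
      have := star_left_conjugate_nonneg hz0 (1 - π); rwa [h3] at this
    have h6 : (1 - π) * z * (1 - π) = 0 := le_antisymm h4 h5
    have hrr : CFC.sqrt z * CFC.sqrt z = z := CFC.sqrt_mul_sqrt_self z hz0
    have hrstar : star (CFC.sqrt z) = CFC.sqrt z :=
      (IsSelfAdjoint.of_nonneg (CFC.sqrt_nonneg _)).star_eq
    have h7 : star (CFC.sqrt z * (1 - π)) * (CFC.sqrt z * (1 - π)) = 0 := by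
      rw [star_mul, hrstar, h3, mul_assoc, ← mul_assoc (CFC.sqrt z) (CFC.sqrt z), hrr,
        ← mul_assoc, h6]
    have h8 : CFC.sqrt z * (1 - π) = 0 := CStarRing.star_mul_self_eq_zero_iff _ |>.mp h7
    have h9 : z * (1 - π) = 0 := by rw [← hrr, mul_assoc, h8, mul_zero]
    rw [mul_sub, mul_one] at h9
    exact (sub_eq_zero.mp h9).symm
  have hmulρ : ∀ z : H →L[ℂ] H, 0 ≤ z → z ≤ ρ → z * ρ = z := by
    intro z hz0 hzρ
    have h1 : ρ * (1 - ρ) = 0 := by rw [mul_sub, mul_one, hρρ, sub_self]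
    have h3 : star (1 - ρ) = 1 - ρ := by rw [star_sub, star_one, hρstar]
    have h4 : (1 - ρ) * z * (1 - ρ) ≤ 0 := by
      calc (1 - ρ) * z * (1 - ρ) = star (1 - ρ) * z * (1 - ρ) := by rw [h3]
      _ ≤ star (1 - ρ) * ρ * (1 - ρ) := star_left_conjugate_le_conjugate hzρ _
      _ = (1 - ρ) * (ρ * (1 - ρ)) := by rw [h3, mul_assoc]
      _ = 0 := by rw [h1, mul_zero]
    have h5 : 0 ≤ (1 - ρ) * z * (1 - ρ) := by
      have := star_left_conjugate_nonneg hz0 (1 - ρ); rwa [h3] at this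
    have h6 : (1 - ρ) * z * (1 - ρ) = 0 := le_antisymm h4 h5
    have hrr : CFC.sqrt z * CFC.sqrt z = z := CFC.sqrt_mul_sqrt_self z hz0
    have hrstar : star (CFC.sqrt z) = CFC.sqrt z :=
      (IsSelfAdjoint.of_nonneg (CFC.sqrt_nonneg _)).star_eq
    have h7 : star (CFC.sqrt z * (1 - ρ)) * (CFC.sqrt z * (1 - ρ)) = 0 := by
      rw [star_mul, hrstar, h3, mul_assoc, ← mul_assoc (CFC.sqrt z) (CFC.sqrt z), hrr,
        ← mul_assoc, h6]
    have h8 : CFC.sqrt z * (1 - ρ) = 0 := CStarRing.star_mul_self_eq_zero_iff _ |>.mp h7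
    have h9 : z * (1 - ρ) = 0 := by rw [← hrr, mul_assoc, h8, mul_zero]
    rw [mul_sub, mul_one] at h9
    exact (sub_eq_zero.mp h9).symm
  have hxπe : x * π = x := hmulπ x hx0 hxπ
  have hyρe : y * ρ = y := hmulρ y hy0 hyρ
  -- matrix entries of the orthogonality hypothesis
  have e00 : x * y + v * s * (star w * t) = 0 := by
    simpa [pMat, Matrix.mul_apply, Fin.sum_univ_two] using congrFun (congrFun horth 0) 0
  have e01 : x * (w * t) + v * s * (ρ - y) = 0 := by
    simpa [pMat, Matrix.mul_apply, Fin.sum_univ_two] using congrFun (congrFun horth 0) 1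
  have e10 : star v * s * y + (π - x) * (star w * t) = 0 := by
    simpa [pMat, Matrix.mul_apply, Fin.sum_univ_two] using congrFun (congrFun horth 1) 0
  have e11 : star v * s * (w * t) + (π - x) * (ρ - y) = 0 := by
    simpa [pMat, Matrix.mul_apply, Fin.sum_univ_two] using congrFun (congrFun horth 1) 1
  -- the commutative subring
  letI R := M.toStarSubalgebra
  letI : CommRing R :=
    { (inferInstance : Ring R) with mul_comm := fun a b => Subtype.ext (hcomm a a.2 b b.2) }
  set X : R := ⟨x, hxM⟩ with hXdef
  set Y : R := ⟨y, hyM⟩ with hYdef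
  set P : R := ⟨π, hπM⟩ with hPdef
  set Q : R := ⟨ρ, hρM⟩ with hQdef
  set V : R := ⟨v, hvM⟩ with hVdef
  set W : R := ⟨w, hwM⟩ with hWdef
  set U : R := ⟨u, huM⟩ with hUdef
  set S : R := ⟨s, hsM⟩ with hSdef
  set T : R := ⟨t, htM⟩ with hTdef
  have sX : star X = X := Subtype.ext hxstar
  have sY : star Y = Y := Subtype.ext hystar
  have sS : star S = S := Subtype.ext hsstar
  have sT : star T = T := Subtype.ext htstar
  have sP : star P = P := Subtype.ext hπstar
  have sQ : star Q = Q := Subtype.ext hρstar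
  have hP : P * P = P := Subtype.ext (by push_cast; exact hππ)
  have hQ : Q * Q = Q := Subtype.ext (by push_cast; exact hρρ)
  have hS2 : S * S = X * (P - X) := Subtype.ext (by push_cast; exact hss)
  have hT2 : T * T = Y * (Q - Y) := Subtype.ext (by push_cast; exact htt)
  have hXP : X * P = X := Subtype.ext (by push_cast; exact hxπe)
  have hYQ : Y * Q = Y := Subtype.ext (by push_cast; exact hyρe)
  have hVV : V * star V = 1 := Subtype.ext (by push_cast; exact hv2)
  have hVV' : star V * V = 1 := Subtype.ext (by push_cast; exact hv1)
  have hWW : W * star W = 1 := Subtype.ext (by push_cast; exact hw2)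
  have hWW' : star W * W = 1 := Subtype.ext (by push_cast; exact hw1)
  have hU1 : U * (P - P * Q) = V * (P - P * Q) := Subtype.ext (by push_cast; exact hu₁)
  have hU2 : U * (Q - P * Q) = W * (Q - P * Q) := Subtype.ext (by push_cast; exact hu₂)
  have hPXX : P * (X * (P - X)) = X * (P - X) := Subtype.ext (by push_cast; exact hrpx.2.1)
  have hQYY : Q * (Y * (Q - Y)) = Y * (Q - Y) := Subtype.ext (by push_cast; exact hrpy.2.1)
  have m11 : X * Y + V * S * (star W * T) = 0 := Subtype.ext (by push_cast; exact e00)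
  have m12 : X * (W * T) + V * S * (Q - Y) = 0 := Subtype.ext (by push_cast; exact e01)
  have m21 : star V * S * Y + (P - X) * (star W * T) = 0 := Subtype.ext (by push_cast; exact e10)
  have m22 : star V * S * (W * T) + (P - X) * (Q - Y) = 0 :=
    Subtype.ext (by push_cast; exact e11)
  -- star of the (1,1) entry
  have hm11' : X * Y + star V * W * (S * T) = 0 := by
    have h := congrArg star m11
    simp only [star_add, star_mul', star_star, star_zero, sX, sY, sS, sT] at h
    linear_combination h
  have hxy : X * Y = (P - X) * (Q - Y) := by linear_combination hm11' - m22
  have hq : P * Y + X * Q = P * Q := by linear_combination hxy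
  have hYC : Y * (P * Q) = P * Q - X * (P * Q) := by
    linear_combination Q * hq + Q * hXP + (P - X) * hQ
  have hY2C : (Y * Y) * (P * Q) = P * Q - 2 * (X * (P * Q)) + (X * X) * (P * Q) := by
    linear_combination (Y + 1 - X) * hYC
  -- range projection facts: π * s = s and ρ * t = t
  have hPSS : P * (S * S) = S * S := by linear_combination hPXX + P * hS2 - hS2
  have hK2 : (S - P * S) * (S - P * S) = 0 := by linear_combination (S * S) * hP - hPSS
  have hπs : π * s = s := by
    have hk2 : (s - π * s) * (s - π * s) = 0 := by
      simpa using congrArg Subtype.val hK2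
    have hkstar : star (s - π * s) = s - π * s := by
      rw [star_sub, hsstar, star_mul, hsstar, hπstar, hcomm s hsM π hπM]
    have := eq_zero_of_selfadj_sq hkstar hk2
    have h := sub_eq_zero.mp this
    exact h.symm
  have hQTT : Q * (T * T) = T * T := by linear_combination hQYY + Q * hT2 - hT2
  have hK2' : (T - Q * T) * (T - Q * T) = 0 := by linear_combination (T * T) * hQ - hQTT
  have hρt : ρ * t = t := by
    have hk2 : (t - ρ * t) * (t - ρ * t) = 0 := by
      simpa using congrArg Subtype.val hK2'
    have hkstar : star (t - ρ * t) = t - ρ * t := by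
      rw [star_sub, htstar, star_mul, htstar, hρstar, hcomm t htM ρ hρM]
    have := eq_zero_of_selfadj_sq hkstar hk2
    have h := sub_eq_zero.mp this
    exact h.symm
  have hPS : P * S = S := Subtype.ext (by push_cast; exact hπs)
  have hQT : Q * T = T := Subtype.ext (by push_cast; exact hρt)
  -- projections in R
  have hCC : (P * Q) * (P * Q) = P * Q := by linear_combination Q * Q * hP + P * hQ
  have hAA : (P - P * Q) * (P - P * Q) = P - P * Q := by
    linear_combination (1 - 2 * Q + Q * Q) * hP + P * hQ
  have hBB : (Q - P * Q) * (Q - P * Q) = Q - P * Q := by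
    linear_combination (1 - 2 * P + P * P) * hQ + Q * hP
  have hABzero : (P - P * Q) * (Q - P * Q) = 0 := by
    linear_combination (P * P - P) * hQ
  -- nonnegativity of the projections at A level
  have hccA : (π * ρ) * (π * ρ) = π * ρ := by simpa using congrArg Subtype.val hCC
  have hcstar : star (π * ρ) = π * ρ := by
    rw [star_mul, hπstar, hρstar, hcomm ρ hρM π hπM]
  have hc0 : 0 ≤ π * ρ := by
    have := star_mul_self_nonneg (π * ρ); rwa [hcstar, hccA] at this
  have haaA : (π - π * ρ) * (π - π * ρ) = π - π * ρ := by
    simpa using congrArg Subtype.val hAA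
  have haastar : star (π - π * ρ) = π - π * ρ := by rw [star_sub, hπstar, hcstar]
  have haa0 : 0 ≤ π - π * ρ := by
    have := star_mul_self_nonneg (π - π * ρ); rwa [haastar, haaA] at this
  have hbbA : (ρ - π * ρ) * (ρ - π * ρ) = ρ - π * ρ := by
    simpa using congrArg Subtype.val hBB
  have hbbstar : star (ρ - π * ρ) = ρ - π * ρ := by rw [star_sub, hρstar, hcstar]
  have hbb0 : 0 ≤ ρ - π * ρ := by
    have := star_mul_self_nonneg (ρ - π * ρ); rwa [hbbstar, hbbA] at this
  -- t * (π * ρ) = s * (π * ρ)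
  have hSPQ : (S * (P * Q)) * (S * (P * Q)) = (X - X * X) * (P * Q) := by
    linear_combination (S * S) * hCC + (P * Q) * hS2 + X * Q * hP
  have hTPQ : (T * (P * Q)) * (T * (P * Q)) = (X - X * X) * (P * Q) := by
    linear_combination (T * T) * hCC + (P * Q) * hT2 + Y * P * hQ + hYC - hY2C
  have hSC2 : (S * (P * Q)) * (S * (P * Q)) = (T * (P * Q)) * (T * (P * Q)) := by
    linear_combination hSPQ - hTPQ
  have hscA : (s * (π * ρ)) * (s * (π * ρ)) = (t * (π * ρ)) * (t * (π * ρ)) := by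
    simpa using congrArg Subtype.val hSC2
  have hsqrts : CFC.sqrt s ∈ M := sqrt_mem_closed _ hMclosed hs0 hsM
  have hsqrtt : CFC.sqrt t ∈ M := sqrt_mem_closed _ hMclosed ht0 htM
  have hcM : (π * ρ) ∈ M := mul_mem hπM hρM
  have hsc0 : 0 ≤ s * (π * ρ) := mul_nonneg_of_comm hs0 hc0 (hcomm _ hsqrts _ hcM)
  have htc0 : 0 ≤ t * (π * ρ) := mul_nonneg_of_comm ht0 hc0 (hcomm _ hsqrtt _ hcM)
  have htcsc : t * (π * ρ) = s * (π * ρ) := by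
    calc t * (π * ρ) = CFC.sqrt ((t * (π * ρ)) * (t * (π * ρ))) :=
          (CFC.sqrt_mul_self _ htc0).symm
      _ = CFC.sqrt ((s * (π * ρ)) * (s * (π * ρ))) := by rw [hscA]
      _ = s * (π * ρ) := CFC.sqrt_mul_self _ hsc0
  have hTCSC : T * (P * Q) = S * (P * Q) := Subtype.ext (by push_cast; exact htcsc)
  -- D = 0
  have hXD : X * (V * (S * (P * Q)) + W * (T * (P * Q))) = 0 := by
    linear_combination (P * Q) * m12 + V * S * hYC - V * S * P * hQ
  have L5 : W * (S * Y) + V * (P * T) - V * (X * T) = 0 := by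
    linear_combination V * W * m21 - (S * Y * W) * hVV - (V * (P * T - X * T)) * hWW
  have hD2 : (V * (S * (P * Q)) + W * (T * (P * Q))) -
      X * (V * (S * (P * Q)) + W * (T * (P * Q))) = 0 := by
    linear_combination (P * Q) * L5 - W * S * hYC - V * P * hTCSC - V * (P * Q) * hPS
      + V * X * hTCSC + (W - X * W) * hTCSC
  have hD : V * (S * (P * Q)) + W * (T * (P * Q)) = 0 := by linear_combination hXD + hD2
  -- goal entry identities in R
  have g11 : X + Y = P * Q + (X * (P - P * Q) + Y * (Q - P * Q)) := by
    linear_combination hYC - hXP - hYQ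
  have g22 : (P - X) + (Q - Y) =
      P * Q + ((P - P * Q) + (Q - P * Q) - (X * (P - P * Q) + Y * (Q - P * Q))) := by
    linear_combination hXP + hYQ - hYC
  have gZ : (X * (P - P * Q) + Y * (Q - P * Q)) *
        ((P - P * Q) + (Q - P * Q) - (X * (P - P * Q) + Y * (Q - P * Q))) =
      (S * (P - P * Q) + T * (Q - P * Q)) * (S * (P - P * Q) + T * (Q - P * Q)) := by
    linear_combination (-((P - P * Q) * (P - P * Q))) * hS2
      + (-((P - P * Q) * (P - P * Q))) * hXP
      + (-((Q - P * Q) * (Q - P * Q))) * hT2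
      + (-((Q - P * Q) * (Q - P * Q))) * hYQ
      + (X + Y - 2 * X * Y - 2 * S * T) * hABzero
  have g12 : V * S + W * T = U * (S * (P - P * Q) + T * (Q - P * Q)) := by
    linear_combination (-S) * hU1 + (-T) * hU2 - V * hPS - W * hQT + hD
  have g21 : star V * S + star W * T = star U * (S * (P - P * Q) + T * (Q - P * Q)) := by
    have h := congrArg star g12
    simp only [star_add, star_mul', star_sub, star_star, sS, sT, sP, sQ] at h
    linear_combination h
  -- back to the operator algebra
  have a11 : x + y = π * ρ + (x * (π - π * ρ) + y * (ρ - π * ρ)) := by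
    simpa using congrArg Subtype.val g11
  have a22 : (π - x) + (ρ - y) =
      π * ρ + ((π - π * ρ) + (ρ - π * ρ) - (x * (π - π * ρ) + y * (ρ - π * ρ))) := by
    simpa using congrArg Subtype.val g22
  have hzz : (x * (π - π * ρ) + y * (ρ - π * ρ)) *
        ((π - π * ρ) + (ρ - π * ρ) - (x * (π - π * ρ) + y * (ρ - π * ρ))) =
      (s * (π - π * ρ) + t * (ρ - π * ρ)) * (s * (π - π * ρ) + t * (ρ - π * ρ)) := by
    simpa using congrArg Subtype.val gZ
  have haaM : (π - π * ρ) ∈ M := sub_mem hπM (mul_mem hπM hρM)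
  have hbbM : (ρ - π * ρ) ∈ M := sub_mem hρM (mul_mem hπM hρM)
  have hd0 : 0 ≤ s * (π - π * ρ) + t * (ρ - π * ρ) :=
    add_nonneg (mul_nonneg_of_comm hs0 haa0 (hcomm _ hsqrts _ haaM))
      (mul_nonneg_of_comm ht0 hbb0 (hcomm _ hsqrtt _ hbbM))
  have hsq : CFC.sqrt ((x * (π - π * ρ) + y * (ρ - π * ρ)) *
        ((π - π * ρ) + (ρ - π * ρ) - (x * (π - π * ρ) + y * (ρ - π * ρ)))) =
      s * (π - π * ρ) + t * (ρ - π * ρ) := by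
    rw [hzz]; exact CFC.sqrt_mul_self _ hd0
  have a12 : v * s + w * t = u * (s * (π - π * ρ) + t * (ρ - π * ρ)) := by
    simpa using congrArg Subtype.val g12
  have a21 : star v * s + star w * t = star u * (s * (π - π * ρ) + t * (ρ - π * ρ)) := by
    simpa using congrArg Subtype.val g21
  refine Matrix.ext fun i j => ?_
  fin_cases i <;> fin_cases j
  · simpa [pMat, diagMat] using a11
  · simpa [pMat, diagMat, hsq, ← hs_def, ← ht_def] using a12
  · simpa [pMat, diagMat, hsq, ← hs_def, ← ht_def] using a21
  · simpa [pMat, diagMat, ← hs_def, ← ht_def] using a22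
end

section
/- Let λ₀, μ₀, λ, μ be real numbers satisfying λ₀² + μ₀² = λ² + μ². Then there exist real numbers λ₁, λ₂, μ₁, μ₂ such that λ₁ + μ₁ = λ₀, λ₂ + μ₂ = μ₀, λ₁² + λ₂² = λ², and μ₁² + μ₂² = μ². -/
/-!
Statement 7: If `λ₀² + μ₀² = λ² + μ²` then the system
`λ₁ + μ₁ = λ₀`, `λ₂ + μ₂ = μ₀`, `λ₁² + λ₂² = λ²`, `μ₁² + μ₂² = μ²`
is solvable in `ℝ`.
-/

theorem system_solvable (lam0 mu0 lam mu : ℝ)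
    (h : lam0 ^ 2 + mu0 ^ 2 = lam ^ 2 + mu ^ 2) :
    ∃ lam1 lam2 mu1 mu2 : ℝ,
      lam1 + mu1 = lam0 ∧ lam2 + mu2 = mu0 ∧
      lam1 ^ 2 + lam2 ^ 2 = lam ^ 2 ∧ mu1 ^ 2 + mu2 ^ 2 = mu ^ 2 := by
  rcases eq_or_ne (lam0 ^ 2 + mu0 ^ 2) 0 with h0 | h0
  · have hl0 : lam0 = 0 := by nlinarith [sq_nonneg lam0, sq_nonneg mu0]
    have hm0 : mu0 = 0 := by nlinarith [sq_nonneg lam0, sq_nonneg mu0]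
    have hl : lam = 0 := by nlinarith [sq_nonneg lam, sq_nonneg mu]
    have hm : mu = 0 := by nlinarith [sq_nonneg lam, sq_nonneg mu]
    exact ⟨0, 0, 0, 0, by simp [hl0, hm0, hl, hm]⟩
  · have h' : lam0 ^ 2 + mu0 ^ 2 = lam ^ 2 + mu ^ 2 := h
    refine ⟨(lam ^ 2 * lam0 - lam * mu * mu0) / (lam0 ^ 2 + mu0 ^ 2),
            (lam ^ 2 * mu0 + lam * mu * lam0) / (lam0 ^ 2 + mu0 ^ 2),
            lam0 - (lam ^ 2 * lam0 - lam * mu * mu0) / (lam0 ^ 2 + mu0 ^ 2),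
            mu0 - (lam ^ 2 * mu0 + lam * mu * lam0) / (lam0 ^ 2 + mu0 ^ 2), by ring, by ring, ?_, ?_⟩
    · field_simp
      linear_combination (-lam ^ 2 * (lam0 ^ 2 + mu0 ^ 2)) * h'
    · field_simp
      linear_combination ((lam0 ^ 2 + mu0 ^ 2) * (lam0 ^ 2 + mu0 ^ 2 - lam ^ 2)) * h'
end

section
/- Let (Ω,ν) be a σ-finite measure space, M = L^∞(Ω,ν), N = M₂(M). Fix x ∈ M with 0 ≤ x ≤ 1 and rp(x(1−x)) = 1, and a unitary v ∈ M. Let h₀, k₀, h₁, k₁, h₁₁, h₁₂, k₁₁, k₁₂ ∈ L²(Ω,ν) be real functions satisfying ν-a.e.: h₁₁ + k₁₁ = h₀, h₁₂ + k₁₂ = k₀, h₁₁² + h₁₂² = h₁², k₁₁² + k₁₂² = k₁², and h₁₁k₁₁ + h₁₂k₁₂ = 0. For pairwise orthogonal projections π₁, π₂, π₃, π₄ ∈ M, set p := π₁⊕π₂ + p(xπ₃,v,π₃) + p((1−x)π₄,−v,π₄) and define μ(p) := (π₁h₀ + π₃h₁₁ + π₄k₁₁, π₂k₀ + π₃h₁₂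 + π₄k₁₂) ∈ L²(Ω,ν) ⊕ L²(Ω,ν). Then for any two projections p, q of this form (with respective data (π₁,π₂,π₃,π₄) and (ρ₁,ρ₂,ρ₃,ρ₄)) satisfying pq = 0, one has ⟨μ(p), μ(q)⟩ = 0 and μ(p+q) = μ(p) + μ(q); moreover ‖μ(p)‖² = ∫_{π₁} h₀² dν + ∫_{π₂} k₀² dν + ∫_{π₃} h₁² dν + ∫_{π₄} k₁² dν. -/
set_option synthInstance.maxHeartbeats 1000000
set_option maxHeartbeats 1000000

open MeasureTheory

/-!
Statement 14: With `0 ≤ x ≤ 1`, `rp(x(1−x)) = 1`, `v` unitary, and real functions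
`h₀, k₀, h₁, k₁, h₁₁, h₁₂, k₁₁, k₁₂ ∈ L²(Ω,ν)` satisfying a.e.
`h₁₁+k₁₁ = h₀`, `h₁₂+k₁₂ = k₀`, `h₁₁²+h₁₂² = h₁²`, `k₁₁²+k₁₂² = k₁²`,
`h₁₁k₁₁+h₁₂k₁₂ = 0`, the map
`μ(π₁⊕π₂ + p(xπ₃,v,π₃) + p((1−x)π₄,−v,π₄)) =
  (π₁h₀+π₃h₁₁+π₄k₁₁, π₂k₀+π₃h₁₂+π₄k₁₂)`
(defined for pairwise orthogonal projections `π₁,…,π₄`) is finitely additive and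
orthogonal on projections of this form, and
`‖μ(p)‖² = ∫_{π₁}h₀² + ∫_{π₂}k₀² + ∫_{π₃}h₁² + ∫_{π₄}k₁²`.

`L^∞(Ω,ν)` is modelled by `Ω →ₘ[ν] ℂ`, with the canonical ring and star-ring
structures; the projections `πᵢ` are characteristic functions of measurable sets.
-/

universe u

variable {Ω : Type u} [MeasurableSpace Ω] {ν : MeasureTheory.Measure Ω}

noncomputable instance AEEqFun.instCommRing : CommRing (Ω →ₘ[ν] ℂ) where
  __ := (inferInstance : AddCommGroup (Ω →ₘ[ν] ℂ))
  __ := (inferInstance : CommMonoid (Ω →ₘ[ν] ℂ))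
  left_distrib a b c := MeasureTheory.AEEqFun.toGerm_injective <| by
    simp [AEEqFun.mul_toGerm, AEEqFun.add_toGerm, mul_add]
  right_distrib a b c := MeasureTheory.AEEqFun.toGerm_injective <| by
    simp [AEEqFun.mul_toGerm, AEEqFun.add_toGerm, add_mul]
  zero_mul a := MeasureTheory.AEEqFun.toGerm_injective <| by
    simp [AEEqFun.mul_toGerm, AEEqFun.zero_toGerm]
  mul_zero a := MeasureTheory.AEEqFun.toGerm_injective <| by
    simp [AEEqFun.mul_toGerm, AEEqFun.zero_toGerm]

noncomputable instance AEEqFun.instStarRing : StarRing (Ω →ₘ[ν] ℂ) where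
  star f := f.comp (starRingEnd ℂ) (by continuity)
  star_involutive f := AEEqFun.ext <| by
    filter_upwards [AEEqFun.coeFn_comp (starRingEnd ℂ) (by continuity)
      (f.comp (starRingEnd ℂ) (by continuity)),
      AEEqFun.coeFn_comp (starRingEnd ℂ) (by continuity) f] with ω h1 h2
    simp_all
  star_mul f g := AEEqFun.ext <| by
    filter_upwards [AEEqFun.coeFn_comp (starRingEnd ℂ) (by continuity) (f * g),
      AEEqFun.coeFn_mul f g,
      AEEqFun.coeFn_mul (g.comp (starRingEnd ℂ) (by continuity))
        (f.comp (starRingEnd ℂ) (by continuity)),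
      AEEqFun.coeFn_comp (starRingEnd ℂ) (by continuity) f,
      AEEqFun.coeFn_comp (starRingEnd ℂ) (by continuity) g] with ω h1 h2 h3 h4 h5
    simp_all [mul_comm]
  star_add f g := AEEqFun.ext <| by
    filter_upwards [AEEqFun.coeFn_comp (starRingEnd ℂ) (by continuity) (f + g),
      AEEqFun.coeFn_add f g,
      AEEqFun.coeFn_add (f.comp (starRingEnd ℂ) (by continuity))
        (g.comp (starRingEnd ℂ) (by continuity)),
      AEEqFun.coeFn_comp (starRingEnd ℂ) (by continuity) f,
      AEEqFun.coeFn_comp (starRingEnd ℂ) (by continuity) g] with ω h1 h2 h3 h4 h5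
    simp_all

/-- The characteristic function of a measurable set `s`, as a projection of
`M = L^∞(Ω,ν)`. -/
noncomputable def ind (ν : MeasureTheory.Measure Ω) {s : Set Ω} (hs : MeasurableSet s) :
    Ω →ₘ[ν] ℂ :=
  AEEqFun.mk (s.indicator fun _ => (1 : ℂ))
    ((measurable_const.indicator hs).aestronglyMeasurable)

/-- The positive square root of a positive element of `M = L^∞(Ω,ν)` (computed
pointwise). -/
noncomputable def aeSqrt (a : Ω →ₘ[ν] ℂ) : Ω →ₘ[ν] ℂ :=
  a.comp (fun z => (Real.sqrt z.re : ℂ)) (by continuity)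

/-- The matrix `p(y,v,π)`. -/
noncomputable def pm (y v π : Ω →ₘ[ν] ℂ) : Matrix (Fin 2) (Fin 2) (Ω →ₘ[ν] ℂ) :=
  !![y, v * aeSqrt (y * (π - y));
     star v * aeSqrt (y * (π - y)), π - y]

/-- The diagonal matrix `π₁ ⊕ π₂ = diag(π₁,π₂)`. -/
noncomputable def diagN (π₁ π₂ : Ω →ₘ[ν] ℂ) : Matrix (Fin 2) (Fin 2) (Ω →ₘ[ν] ℂ) :=
  !![π₁, 0; 0, π₂]

/-- `q` is a projection of `M = L^∞(Ω,ν)`. -/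
def IsProjectionM (q : Ω →ₘ[ν] ℂ) : Prop := q * q = q ∧ star q = q

/-- `q` is the range projection of `a` in `M`: the least projection `q` of `M` with
`q·a = a` (for projections, `q ≤ q'` iff `q·q' = q`). -/
def IsRangeProjectionM (q a : Ω →ₘ[ν] ℂ) : Prop :=
  IsProjectionM q ∧ q * a = a ∧
    ∀ q', IsProjectionM q' → q' * a = a → q * q' = q

/-- The projection `π₁⊕π₂ + p(xπ₃,v,π₃) + p((1−x)π₄,−v,π₄)` of `N = M₂(L^∞(Ω,ν))`
attached to a quadruple of measurable sets. -/
noncomputable def projQuad (x v : Ω →ₘ[ν] ℂ) {s : Fin 4 → Set Ω}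
    (hs : ∀ i, MeasurableSet (s i)) : Matrix (Fin 2) (Fin 2) (Ω →ₘ[ν] ℂ) :=
  diagN (ind ν (hs 0)) (ind ν (hs 1)) +
    pm (x * ind ν (hs 2)) v (ind ν (hs 2)) +
    pm ((1 - x) * ind ν (hs 3)) (-v) (ind ν (hs 3))

/-- The restriction `χ_t · f` of `f ∈ L²(ν; ℝ)` to a measurable set `t`. -/
noncomputable def restrictL2 (f : Lp ℝ 2 ν) {t : Set Ω} (ht : MeasurableSet t) :
    Lp ℝ 2 ν :=
  ((Lp.memLp f).indicator ht).toLp (t.indicator f)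

/-- The value `μ(p) = (π₁h₀+π₃h₁₁+π₄k₁₁, π₂k₀+π₃h₁₂+π₄k₁₂)` of the vector measure,
in the Hilbert space `L²(ν) ⊕ L²(ν)`. -/
noncomputable def muQuad (h₀ k₀ h₁₁ h₁₂ k₁₁ k₁₂ : Lp ℝ 2 ν) {s : Fin 4 → Set Ω}
    (hs : ∀ i, MeasurableSet (s i)) : WithLp 2 (Lp ℝ 2 ν × Lp ℝ 2 ν) :=
  (WithLp.equiv 2 (Lp ℝ 2 ν × Lp ℝ 2 ν)).symm
    (restrictL2 h₀ (hs 0) + restrictL2 h₁₁ (hs 2) + restrictL2 k₁₁ (hs 3),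
     restrictL2 k₀ (hs 1) + restrictL2 h₁₂ (hs 2) + restrictL2 k₁₂ (hs 3))

section Helpers
variable {Ω : Type u} [MeasurableSpace Ω] {ν : MeasureTheory.Measure Ω}

lemma ind_coeFn {s : Set Ω} (hs : MeasurableSet s) :
    (ind ν hs : Ω → ℂ) =ᵐ[ν] s.indicator (fun _ => (1:ℂ)) :=
  AEEqFun.coeFn_mk _ _

lemma star_coeFn (f : Ω →ₘ[ν] ℂ) :
    ((star f : Ω →ₘ[ν] ℂ) : Ω → ℂ) =ᵐ[ν] fun ω => (starRingEnd ℂ) (f ω) :=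
  AEEqFun.coeFn_comp _ _ f

lemma aeSqrt_coeFn (a : Ω →ₘ[ν] ℂ) :
    (aeSqrt a : Ω → ℂ) =ᵐ[ν] fun ω => ((Real.sqrt (a ω).re : ℝ) : ℂ) :=
  AEEqFun.coeFn_comp _ _ a

lemma restrictL2_coeFn (f : Lp ℝ 2 ν) {A : Set Ω} (hA : MeasurableSet A) :
    (restrictL2 f hA : Ω → ℝ) =ᵐ[ν] A.indicator f :=
  MeasureTheory.MemLp.coeFn_toLp _

lemma inner_restrictL2 (f g : Lp ℝ 2 ν) {A B : Set Ω} (hA : MeasurableSet A)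
    (hB : MeasurableSet B) :
    (inner ℝ (restrictL2 f hA) (restrictL2 g hB) : ℝ)
      = ∫ ω, (A ∩ B).indicator (fun ω => f ω * g ω) ω ∂ν := by
  rw [MeasureTheory.L2.inner_def]
  refine integral_congr_ae ?_
  filter_upwards [restrictL2_coeFn f hA, restrictL2_coeFn g hB] with ω h1 h2
  rw [RCLike.inner_apply, h1, h2]
  by_cases hA' : ω ∈ A <;> by_cases hB' : ω ∈ B <;>
    simp [Set.indicator_of_mem, Set.indicator_of_notMem, hA', hB', mul_comm]

lemma inner_restrictL2_zero (f g : Lp ℝ 2 ν) {A B : Set Ω} (hA : MeasurableSet A)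
    (hB : MeasurableSet B) (h : ν (A ∩ B) = 0) :
    (inner ℝ (restrictL2 f hA) (restrictL2 g hB) : ℝ) = 0 := by
  rw [inner_restrictL2 f g hA hB]
  have hz : (fun ω => (A ∩ B).indicator (fun ω => f ω * g ω) ω) =ᵐ[ν] 0 := by
    filter_upwards [measure_eq_zero_iff_ae_notMem.mp h] with ω hω
    simp [Set.indicator_of_notMem hω]
  rw [integral_congr_ae hz]; simp

lemma restrictL2_union (f : Lp ℝ 2 ν) {A B : Set Ω} (hA : MeasurableSet A)
    (hB : MeasurableSet B) (h : ν (A ∩ B) = 0) :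
    restrictL2 f (hA.union hB) = restrictL2 f hA + restrictL2 f hB := by
  apply MeasureTheory.Lp.ext
  filter_upwards [restrictL2_coeFn f (hA.union hB), restrictL2_coeFn f hA,
    restrictL2_coeFn f hB, MeasureTheory.Lp.coeFn_add (restrictL2 f hA) (restrictL2 f hB),
    measure_eq_zero_iff_ae_notMem.mp h] with ω h1 h2 h3 h4 h5
  rw [h1, h4, Pi.add_apply, h2, h3]
  by_cases hA' : ω ∈ A <;> by_cases hB' : ω ∈ B <;>
    simp_all [Set.indicator_of_mem, Set.indicator_of_notMem, Set.mem_union]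

end Helpers
section Entries
variable {Ω : Type u} [MeasurableSpace Ω] {ν : MeasureTheory.Measure Ω}

lemma projQuad_entries (x v : Ω →ₘ[ν] ℂ) {s : Fin 4 → Set Ω}
    (hs : ∀ i, MeasurableSet (s i)) :
    projQuad x v hs 0 0 = ind ν (hs 0) + x * ind ν (hs 2) + (1 - x) * ind ν (hs 3) ∧
    projQuad x v hs 0 1 = v * aeSqrt ((x * ind ν (hs 2)) * (ind ν (hs 2) - x * ind ν (hs 2)))
      + (-v) * aeSqrt (((1 - x) * ind ν (hs 3)) * (ind ν (hs 3) - (1 - x) * ind ν (hs 3))) ∧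
    projQuad x v hs 1 0 = star v * aeSqrt ((x * ind ν (hs 2)) * (ind ν (hs 2) - x * ind ν (hs 2)))
      + star (-v) * aeSqrt (((1 - x) * ind ν (hs 3)) * (ind ν (hs 3) - (1 - x) * ind ν (hs 3))) ∧
    projQuad x v hs 1 1 = ind ν (hs 1) + (ind ν (hs 2) - x * ind ν (hs 2))
      + (ind ν (hs 3) - (1 - x) * ind ν (hs 3)) := by
  refine ⟨?_, ?_, ?_, ?_⟩ <;>
    simp [projQuad, diagN, pm, Matrix.add_apply]
end Entries
section Coe
variable {Ω : Type u} [MeasurableSpace Ω] {ν : MeasureTheory.Measure Ω}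

lemma sqrtTerm_coeFn (y : Ω →ₘ[ν] ℂ) {A : Set Ω} (hA : MeasurableSet A) :
    (aeSqrt ((y * ind ν hA) * (ind ν hA - y * ind ν hA)) : Ω → ℂ) =ᵐ[ν]
      fun ω => A.indicator (fun _ => (1:ℂ)) ω * ((Real.sqrt ((y ω * (1 - y ω)).re) : ℝ) : ℂ) := by
  refine (aeSqrt_coeFn _).trans ?_
  filter_upwards [AEEqFun.coeFn_mul (y * ind ν hA) (ind ν hA - y * ind ν hA),
    AEEqFun.coeFn_mul y (ind ν hA), AEEqFun.coeFn_sub (ind ν hA) (y * ind ν hA),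
    ind_coeFn hA] with ω e1 e2 e3 e4
  simp only [e1, Pi.mul_apply, Pi.sub_apply, e2, e3, e4]
  by_cases hω : ω ∈ A
  · simp [Set.indicator_of_mem hω]
  · simp [Set.indicator_of_notMem hω]

end Coe
section EntryCoe
variable {Ω : Type u} [MeasurableSpace Ω] {ν : MeasureTheory.Measure Ω}

lemma entry00_coeFn (x v : Ω →ₘ[ν] ℂ) {s : Fin 4 → Set Ω} (hs : ∀ i, MeasurableSet (s i)) :
    (projQuad x v hs 0 0 : Ω → ℂ) =ᵐ[ν] fun ω =>
      (s 0).indicator (fun _ => (1:ℂ)) ω + x ω * (s 2).indicator (fun _ => (1:ℂ)) ω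
        + (1 - x ω) * (s 3).indicator (fun _ => (1:ℂ)) ω := by
  rw [(projQuad_entries x v hs).1]
  filter_upwards [AEEqFun.coeFn_add (ind ν (hs 0) + x * ind ν (hs 2)) ((1 - x) * ind ν (hs 3)),
    AEEqFun.coeFn_add (ind ν (hs 0)) (x * ind ν (hs 2)),
    AEEqFun.coeFn_mul x (ind ν (hs 2)), AEEqFun.coeFn_mul (1 - x) (ind ν (hs 3)),
    AEEqFun.coeFn_sub (1 : Ω →ₘ[ν] ℂ) x, AEEqFun.coeFn_one (β := ℂ) (μ := ν),
    ind_coeFn (hs 0), ind_coeFn (hs 2), ind_coeFn (hs 3)] with ω e1 e2 e3 e4 e5 e6 f0 f2 f3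
  simp only [e1, Pi.add_apply, e2, e3, e4, Pi.mul_apply, e5, Pi.sub_apply, e6, Pi.one_apply,
    f0, f2, f3]

lemma entry11_coeFn (x v : Ω →ₘ[ν] ℂ) {s : Fin 4 → Set Ω} (hs : ∀ i, MeasurableSet (s i)) :
    (projQuad x v hs 1 1 : Ω → ℂ) =ᵐ[ν] fun ω =>
      (s 1).indicator (fun _ => (1:ℂ)) ω + (1 - x ω) * (s 2).indicator (fun _ => (1:ℂ)) ω
        + x ω * (s 3).indicator (fun _ => (1:ℂ)) ω := by
  rw [(projQuad_entries x v hs).2.2.2]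
  filter_upwards [AEEqFun.coeFn_add (ind ν (hs 1) + (ind ν (hs 2) - x * ind ν (hs 2)))
      (ind ν (hs 3) - (1 - x) * ind ν (hs 3)),
    AEEqFun.coeFn_add (ind ν (hs 1)) (ind ν (hs 2) - x * ind ν (hs 2)),
    AEEqFun.coeFn_sub (ind ν (hs 2)) (x * ind ν (hs 2)),
    AEEqFun.coeFn_sub (ind ν (hs 3)) ((1 - x) * ind ν (hs 3)),
    AEEqFun.coeFn_mul x (ind ν (hs 2)), AEEqFun.coeFn_mul (1 - x) (ind ν (hs 3)),
    AEEqFun.coeFn_sub (1 : Ω →ₘ[ν] ℂ) x, AEEqFun.coeFn_one (β := ℂ) (μ := ν),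
    ind_coeFn (hs 1), ind_coeFn (hs 2), ind_coeFn (hs 3)] with ω e1 e2 e3 e4 e5 e6 e7 e8 f1 f2 f3
  simp only [e1, Pi.add_apply, e2, e3, e4, Pi.sub_apply, e5, e6, Pi.mul_apply, e7, e8,
    Pi.one_apply, f1, f2, f3]
  ring

lemma entry01_coeFn (x v : Ω →ₘ[ν] ℂ) {s : Fin 4 → Set Ω} (hs : ∀ i, MeasurableSet (s i)) :
    (projQuad x v hs 0 1 : Ω → ℂ) =ᵐ[ν] fun ω =>
      v ω * ((Real.sqrt ((x ω * (1 - x ω)).re) : ℝ) : ℂ)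
        * ((s 2).indicator (fun _ => (1:ℂ)) ω - (s 3).indicator (fun _ => (1:ℂ)) ω) := by
  rw [(projQuad_entries x v hs).2.1]
  filter_upwards [AEEqFun.coeFn_add
      (v * aeSqrt ((x * ind ν (hs 2)) * (ind ν (hs 2) - x * ind ν (hs 2))))
      ((-v) * aeSqrt (((1 - x) * ind ν (hs 3)) * (ind ν (hs 3) - (1 - x) * ind ν (hs 3)))),
    AEEqFun.coeFn_mul v (aeSqrt ((x * ind ν (hs 2)) * (ind ν (hs 2) - x * ind ν (hs 2)))),
    AEEqFun.coeFn_mul (-v) (aeSqrt (((1 - x) * ind ν (hs 3)) * (ind ν (hs 3) - (1 - x) * ind ν (hs 3)))),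
    AEEqFun.coeFn_neg v,
    sqrtTerm_coeFn x (hs 2), sqrtTerm_coeFn (1 - x) (hs 3),
    AEEqFun.coeFn_sub (1 : Ω →ₘ[ν] ℂ) x, AEEqFun.coeFn_one (β := ℂ) (μ := ν)]
    with ω e1 e2 e3 e4 g2 g3 e5 e6
  simp only [e1, Pi.add_apply, e2, e3, Pi.mul_apply, e4, Pi.neg_apply, g2, g3, e5,
    Pi.sub_apply, e6, Pi.one_apply]
  have harg : (1 - x ω) * (1 - (1 - x ω)) = x ω * (1 - x ω) := by ring
  rw [harg]
  ring

lemma entry10_coeFn (x v : Ω →ₘ[ν] ℂ) {s : Fin 4 → Set Ω} (hs : ∀ i, MeasurableSet (s i)) :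
    (projQuad x v hs 1 0 : Ω → ℂ) =ᵐ[ν] fun ω =>
      (starRingEnd ℂ) (v ω) * ((Real.sqrt ((x ω * (1 - x ω)).re) : ℝ) : ℂ)
        * ((s 2).indicator (fun _ => (1:ℂ)) ω - (s 3).indicator (fun _ => (1:ℂ)) ω) := by
  rw [(projQuad_entries x v hs).2.2.1]
  filter_upwards [AEEqFun.coeFn_add
      (star v * aeSqrt ((x * ind ν (hs 2)) * (ind ν (hs 2) - x * ind ν (hs 2))))
      (star (-v) * aeSqrt (((1 - x) * ind ν (hs 3)) * (ind ν (hs 3) - (1 - x) * ind ν (hs 3)))),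
    AEEqFun.coeFn_mul (star v) (aeSqrt ((x * ind ν (hs 2)) * (ind ν (hs 2) - x * ind ν (hs 2)))),
    AEEqFun.coeFn_mul (star (-v)) (aeSqrt (((1 - x) * ind ν (hs 3)) * (ind ν (hs 3) - (1 - x) * ind ν (hs 3)))),
    star_coeFn v, star_coeFn (-v), AEEqFun.coeFn_neg v,
    sqrtTerm_coeFn x (hs 2), sqrtTerm_coeFn (1 - x) (hs 3),
    AEEqFun.coeFn_sub (1 : Ω →ₘ[ν] ℂ) x, AEEqFun.coeFn_one (β := ℂ) (μ := ν)]
    with ω e1 e2 e3 e4 e4' e4'' g2 g3 e5 e6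
  simp only [e1, Pi.add_apply, e2, e3, Pi.mul_apply, e4, e4', e4'', Pi.neg_apply, g2, g3, e5,
    Pi.sub_apply, e6, Pi.one_apply]
  have harg : (1 - x ω) * (1 - (1 - x ω)) = x ω * (1 - x ω) := by ring
  rw [harg, map_neg]
  ring

end EntryCoe
section Rp
variable {Ω : Type u} [MeasurableSpace Ω] {ν : MeasureTheory.Measure Ω}

lemma ae_ne_zero_of_rangeProjection_one (a : Ω →ₘ[ν] ℂ)
    (hrp : IsRangeProjectionM (1 : Ω →ₘ[ν] ℂ) a) :
    ∀ᵐ ω ∂ν, a ω ≠ 0 := by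
  have hmeas : MeasurableSet {ω | a ω ≠ 0} := by
    have := (MeasureTheory.AEEqFun.stronglyMeasurable a).measurable
    exact (this (MeasurableSet.singleton 0)).compl
  set q' : Ω →ₘ[ν] ℂ := ind ν hmeas with hq'
  have hcoe := ind_coeFn (ν := ν) hmeas
  have hproj : IsProjectionM q' := by
    constructor
    · apply MeasureTheory.AEEqFun.ext
      filter_upwards [AEEqFun.coeFn_mul q' q', hcoe] with ω e1 e2
      rw [e1, Pi.mul_apply, e2]
      by_cases hω : ω ∈ {ω | a ω ≠ 0} <;>
        simp [Set.indicator_of_mem, Set.indicator_of_notMem, hω]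
    · apply MeasureTheory.AEEqFun.ext
      filter_upwards [star_coeFn q', hcoe] with ω e1 e2
      rw [e1, e2]
      by_cases hω : ω ∈ {ω | a ω ≠ 0} <;>
        simp [Set.indicator_of_mem, Set.indicator_of_notMem, hω]
  have hqa : q' * a = a := by
    apply MeasureTheory.AEEqFun.ext
    filter_upwards [AEEqFun.coeFn_mul q' a, hcoe] with ω e1 e2
    rw [e1, Pi.mul_apply, e2]
    by_cases hω : a ω = 0
    · simp [hω]
    · simp [Set.indicator_of_mem, show ω ∈ {ω | a ω ≠ 0} from hω]
  have h1 : q' = 1 := by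
    have := hrp.2.2 q' hproj hqa
    rwa [one_mul] at this
  have : (q' : Ω → ℂ) =ᵐ[ν] fun _ => (1:ℂ) := by
    rw [h1]; exact AEEqFun.coeFn_one
  filter_upwards [hcoe, this] with ω e1 e2
  intro h0
  rw [e2] at e1
  by_cases hω : ω ∈ {ω | a ω ≠ 0}
  · exact hω h0
  · simp [Set.indicator_of_notMem, hω] at e1

end Rp
section Nullity
variable {Ω : Type u} [MeasurableSpace Ω] {ν : MeasureTheory.Measure Ω}

lemma nullity (x v : Ω →ₘ[ν] ℂ)
    (hx : ∀ᵐ ω ∂ν, (x ω).im = 0 ∧ 0 ≤ (x ω).re ∧ (x ω).re ≤ 1)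
    (hrp : IsRangeProjectionM (1 : Ω →ₘ[ν] ℂ) (x * (1 - x)))
    {s t : Fin 4 → Set Ω}
    (hs : ∀ i, MeasurableSet (s i)) (ht : ∀ i, MeasurableSet (t i))
    (hsorth : Pairwise fun i j => ν (s i ∩ s j) = 0)
    (htorth : Pairwise fun i j => ν (t i ∩ t j) = 0)
    (horth : projQuad x v hs * projQuad x v ht = 0) :
    ∀ i j : Fin 4, ¬((i = 0 ∧ j = 1) ∨ (i = 1 ∧ j = 0) ∨ (i = 2 ∧ j = 3) ∨ (i = 3 ∧ j = 2)) →
      ν (s i ∩ t j) = 0 := by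
  -- x(1-x) ≠ 0 a.e.
  have hne : ∀ᵐ ω ∂ν, x ω * (1 - x ω) ≠ 0 := by
    filter_upwards [ae_ne_zero_of_rangeProjection_one _ hrp,
      AEEqFun.coeFn_mul x (1 - x), AEEqFun.coeFn_sub (1 : Ω →ₘ[ν] ℂ) x,
      AEEqFun.coeFn_one (β := ℂ) (μ := ν)] with ω h1 h2 h3 h4
    rw [h2, Pi.mul_apply, h3, Pi.sub_apply, h4, Pi.one_apply] at h1
    exact h1
  -- a.e. pairwise disjointness
  have hd_s : ∀ᵐ ω ∂ν, ∀ i j : Fin 4, i ≠ j → ω ∉ s i ∩ s j := by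
    rw [MeasureTheory.ae_all_iff]; intro i
    rw [MeasureTheory.ae_all_iff]; intro j
    by_cases h : i = j
    · exact Filter.Eventually.of_forall fun ω hij => absurd h hij
    · filter_upwards [measure_eq_zero_iff_ae_notMem.mp (hsorth h)] with ω h1 _
      exact h1
  have hd_t : ∀ᵐ ω ∂ν, ∀ i j : Fin 4, i ≠ j → ω ∉ t i ∩ t j := by
    rw [MeasureTheory.ae_all_iff]; intro i
    rw [MeasureTheory.ae_all_iff]; intro j
    by_cases h : i = j
    · exact Filter.Eventually.of_forall fun ω hij => absurd h hij
    · filter_upwards [measure_eq_zero_iff_ae_notMem.mp (htorth h)] with ω h1 _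
      exact h1
  -- the two entry equations, pointwise
  have h00 : projQuad x v hs 0 0 * projQuad x v ht 0 0
      + projQuad x v hs 0 1 * projQuad x v ht 1 0 = 0 := by
    have : (projQuad x v hs * projQuad x v ht) 0 0 = 0 := by rw [horth]; rfl
    rwa [Matrix.mul_apply, Fin.sum_univ_two] at this
  have h11 : projQuad x v hs 1 0 * projQuad x v ht 0 1
      + projQuad x v hs 1 1 * projQuad x v ht 1 1 = 0 := by
    have : (projQuad x v hs * projQuad x v ht) 1 1 = 0 := by rw [horth]; rfl
    rwa [Matrix.mul_apply, Fin.sum_univ_two] at this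
  have hz00 : ((projQuad x v hs 0 0 * projQuad x v ht 0 0
      + projQuad x v hs 0 1 * projQuad x v ht 1 0 : Ω →ₘ[ν] ℂ) : Ω → ℂ) =ᵐ[ν] fun _ => 0 := by
    rw [h00]; exact AEEqFun.coeFn_zero
  have hz11 : ((projQuad x v hs 1 0 * projQuad x v ht 0 1
      + projQuad x v hs 1 1 * projQuad x v ht 1 1 : Ω →ₘ[ν] ℂ) : Ω → ℂ) =ᵐ[ν] fun _ => 0 := by
    rw [h11]; exact AEEqFun.coeFn_zero
  have heq00 : ∀ᵐ ω ∂ν,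
      ((s 0).indicator (fun _ => (1:ℂ)) ω + x ω * (s 2).indicator (fun _ => (1:ℂ)) ω
        + (1 - x ω) * (s 3).indicator (fun _ => (1:ℂ)) ω)
      * ((t 0).indicator (fun _ => (1:ℂ)) ω + x ω * (t 2).indicator (fun _ => (1:ℂ)) ω
        + (1 - x ω) * (t 3).indicator (fun _ => (1:ℂ)) ω)
      + (v ω * ((Real.sqrt ((x ω * (1 - x ω)).re) : ℝ) : ℂ)
          * ((s 2).indicator (fun _ => (1:ℂ)) ω - (s 3).indicator (fun _ => (1:ℂ)) ω))
      * ((starRingEnd ℂ) (v ω) * ((Real.sqrt ((x ω * (1 - x ω)).re) : ℝ) : ℂ)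
          * ((t 2).indicator (fun _ => (1:ℂ)) ω - (t 3).indicator (fun _ => (1:ℂ)) ω)) = 0 := by
    filter_upwards [hz00,
      AEEqFun.coeFn_add (projQuad x v hs 0 0 * projQuad x v ht 0 0)
        (projQuad x v hs 0 1 * projQuad x v ht 1 0),
      AEEqFun.coeFn_mul (projQuad x v hs 0 0) (projQuad x v ht 0 0),
      AEEqFun.coeFn_mul (projQuad x v hs 0 1) (projQuad x v ht 1 0),
      entry00_coeFn x v hs, entry00_coeFn x v ht,
      entry01_coeFn x v hs, entry10_coeFn x v ht] with ω e0 e1 e2 e3 f1 f2 f3 f4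
    rw [e1, Pi.add_apply, e2, e3, Pi.mul_apply, Pi.mul_apply, f1, f2, f3, f4] at e0
    exact e0
  have heq11 : ∀ᵐ ω ∂ν,
      ((starRingEnd ℂ) (v ω) * ((Real.sqrt ((x ω * (1 - x ω)).re) : ℝ) : ℂ)
          * ((s 2).indicator (fun _ => (1:ℂ)) ω - (s 3).indicator (fun _ => (1:ℂ)) ω))
      * (v ω * ((Real.sqrt ((x ω * (1 - x ω)).re) : ℝ) : ℂ)
          * ((t 2).indicator (fun _ => (1:ℂ)) ω - (t 3).indicator (fun _ => (1:ℂ)) ω))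
      + ((s 1).indicator (fun _ => (1:ℂ)) ω + (1 - x ω) * (s 2).indicator (fun _ => (1:ℂ)) ω
        + x ω * (s 3).indicator (fun _ => (1:ℂ)) ω)
      * ((t 1).indicator (fun _ => (1:ℂ)) ω + (1 - x ω) * (t 2).indicator (fun _ => (1:ℂ)) ω
        + x ω * (t 3).indicator (fun _ => (1:ℂ)) ω) = 0 := by
    filter_upwards [hz11,
      AEEqFun.coeFn_add (projQuad x v hs 1 0 * projQuad x v ht 0 1)
        (projQuad x v hs 1 1 * projQuad x v ht 1 1),
      AEEqFun.coeFn_mul (projQuad x v hs 1 0) (projQuad x v ht 0 1),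
      AEEqFun.coeFn_mul (projQuad x v hs 1 1) (projQuad x v ht 1 1),
      entry10_coeFn x v hs, entry01_coeFn x v ht,
      entry11_coeFn x v hs, entry11_coeFn x v ht] with ω e0 e1 e2 e3 f1 f2 f3 f4
    rw [e1, Pi.add_apply, e2, e3, Pi.mul_apply, Pi.mul_apply, f1, f2, f3, f4] at e0
    exact e0
  intro i j hij
  rw [measure_eq_zero_iff_ae_notMem]
  filter_upwards [hx, hne, hd_s, hd_t, heq00, heq11] with ω hxω hneω hdsω hdtω q00 q11
  rintro ⟨hsi, htj⟩
  obtain ⟨him, hr0le, hr1le⟩ := hxω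
  have hre : x ω = ((x ω).re : ℂ) := Complex.ext (by simp) (by simp [him])
  set r := (x ω).re with hrdef
  rw [hre] at q00 q11 hneω
  have harg2 : (((r:ℂ)) * (1 - (r:ℂ))).re = r * (1 - r) := by
    simp [Complex.mul_re, Complex.sub_re, Complex.sub_im, Complex.one_re, Complex.one_im,
      Complex.ofReal_re, Complex.ofReal_im]
  rw [harg2] at q00 q11
  have hrne : r * (1 - r) ≠ 0 := by
    intro h
    apply hneω
    rw [show ((r:ℂ)) * (1 - (r:ℂ)) = ((r * (1-r) : ℝ) : ℂ) by push_cast; ring, h]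
    simp
  have hr0 : 0 < r := lt_of_le_of_ne hr0le (fun h => hrne (by rw [← h]; ring))
  have hr1 : r < 1 := lt_of_le_of_ne hr1le (fun h => hrne (by rw [h]; ring))
  set w := Real.sqrt (r * (1 - r)) with hwdef
  have hww : w * w = r * (1 - r) := Real.mul_self_sqrt (by nlinarith)
  have hs' : ∀ i', i' ≠ i → ω ∉ s i' := fun i' hne' hmem => hdsω i i' (Ne.symm hne') ⟨hsi, hmem⟩
  have ht' : ∀ j', j' ≠ j → ω ∉ t j' := fun j' hne' hmem => hdtω j j' (Ne.symm hne') ⟨htj, hmem⟩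
  fin_cases i <;> fin_cases j
  · have hsm : ω ∈ s 0 := hsi
    have htm : ω ∈ t 0 := htj
    simp only [Set.indicator_of_mem hsm, Set.indicator_of_mem htm,
      Set.indicator_of_notMem (hs' 1 (by decide)), Set.indicator_of_notMem (hs' 2 (by decide)), Set.indicator_of_notMem (hs' 3 (by decide)), Set.indicator_of_notMem (ht' 1 (by decide)), Set.indicator_of_notMem (ht' 2 (by decide)), Set.indicator_of_notMem (ht' 3 (by decide)),
      mul_zero, mul_one, zero_mul, one_mul, add_zero, zero_add, sub_zero, zero_sub,
      mul_neg, neg_mul, neg_neg, sub_self, neg_zero, Complex.ofReal_zero] at q00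
    exact one_ne_zero q00
  · exact hij (by simp)
  · have hsm : ω ∈ s 0 := hsi
    have htm : ω ∈ t 2 := htj
    simp only [Set.indicator_of_mem hsm, Set.indicator_of_mem htm,
      Set.indicator_of_notMem (hs' 1 (by decide)), Set.indicator_of_notMem (hs' 2 (by decide)), Set.indicator_of_notMem (hs' 3 (by decide)), Set.indicator_of_notMem (ht' 0 (by decide)), Set.indicator_of_notMem (ht' 1 (by decide)), Set.indicator_of_notMem (ht' 3 (by decide)),
      mul_zero, mul_one, zero_mul, one_mul, add_zero, zero_add, sub_zero, zero_sub,
      mul_neg, neg_mul, neg_neg, sub_self, neg_zero, Complex.ofReal_zero] at q00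
    exact hr0.ne' (by exact_mod_cast q00)
  · have hsm : ω ∈ s 0 := hsi
    have htm : ω ∈ t 3 := htj
    simp only [Set.indicator_of_mem hsm, Set.indicator_of_mem htm,
      Set.indicator_of_notMem (hs' 1 (by decide)), Set.indicator_of_notMem (hs' 2 (by decide)), Set.indicator_of_notMem (hs' 3 (by decide)), Set.indicator_of_notMem (ht' 0 (by decide)), Set.indicator_of_notMem (ht' 1 (by decide)), Set.indicator_of_notMem (ht' 2 (by decide)),
      mul_zero, mul_one, zero_mul, one_mul, add_zero, zero_add, sub_zero, zero_sub,
      mul_neg, neg_mul, neg_neg, sub_self, neg_zero, Complex.ofReal_zero] at q00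
    exact (by nlinarith : (1:ℝ) - r ≠ 0) (by exact_mod_cast q00)
  · exact hij (by simp)
  · have hsm : ω ∈ s 1 := hsi
    have htm : ω ∈ t 1 := htj
    simp only [Set.indicator_of_mem hsm, Set.indicator_of_mem htm,
      Set.indicator_of_notMem (hs' 0 (by decide)), Set.indicator_of_notMem (hs' 2 (by decide)), Set.indicator_of_notMem (hs' 3 (by decide)), Set.indicator_of_notMem (ht' 0 (by decide)), Set.indicator_of_notMem (ht' 2 (by decide)), Set.indicator_of_notMem (ht' 3 (by decide)),
      mul_zero, mul_one, zero_mul, one_mul, add_zero, zero_add, sub_zero, zero_sub,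
      mul_neg, neg_mul, neg_neg, sub_self, neg_zero, Complex.ofReal_zero] at q11
    exact one_ne_zero q11
  · have hsm : ω ∈ s 1 := hsi
    have htm : ω ∈ t 2 := htj
    simp only [Set.indicator_of_mem hsm, Set.indicator_of_mem htm,
      Set.indicator_of_notMem (hs' 0 (by decide)), Set.indicator_of_notMem (hs' 2 (by decide)), Set.indicator_of_notMem (hs' 3 (by decide)), Set.indicator_of_notMem (ht' 0 (by decide)), Set.indicator_of_notMem (ht' 1 (by decide)), Set.indicator_of_notMem (ht' 3 (by decide)),
      mul_zero, mul_one, zero_mul, one_mul, add_zero, zero_add, sub_zero, zero_sub,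
      mul_neg, neg_mul, neg_neg, sub_self, neg_zero, Complex.ofReal_zero] at q11
    exact (by nlinarith : (1:ℝ) - r ≠ 0) (by exact_mod_cast q11)
  · have hsm : ω ∈ s 1 := hsi
    have htm : ω ∈ t 3 := htj
    simp only [Set.indicator_of_mem hsm, Set.indicator_of_mem htm,
      Set.indicator_of_notMem (hs' 0 (by decide)), Set.indicator_of_notMem (hs' 2 (by decide)), Set.indicator_of_notMem (hs' 3 (by decide)), Set.indicator_of_notMem (ht' 0 (by decide)), Set.indicator_of_notMem (ht' 1 (by decide)), Set.indicator_of_notMem (ht' 2 (by decide)),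
      mul_zero, mul_one, zero_mul, one_mul, add_zero, zero_add, sub_zero, zero_sub,
      mul_neg, neg_mul, neg_neg, sub_self, neg_zero, Complex.ofReal_zero] at q11
    exact hr0.ne' (by exact_mod_cast q11)
  · have hsm : ω ∈ s 2 := hsi
    have htm : ω ∈ t 0 := htj
    simp only [Set.indicator_of_mem hsm, Set.indicator_of_mem htm,
      Set.indicator_of_notMem (hs' 0 (by decide)), Set.indicator_of_notMem (hs' 1 (by decide)), Set.indicator_of_notMem (hs' 3 (by decide)), Set.indicator_of_notMem (ht' 1 (by decide)), Set.indicator_of_notMem (ht' 2 (by decide)), Set.indicator_of_notMem (ht' 3 (by decide)),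
      mul_zero, mul_one, zero_mul, one_mul, add_zero, zero_add, sub_zero, zero_sub,
      mul_neg, neg_mul, neg_neg, sub_self, neg_zero, Complex.ofReal_zero] at q00
    exact hr0.ne' (by exact_mod_cast q00)
  · have hsm : ω ∈ s 2 := hsi
    have htm : ω ∈ t 1 := htj
    simp only [Set.indicator_of_mem hsm, Set.indicator_of_mem htm,
      Set.indicator_of_notMem (hs' 0 (by decide)), Set.indicator_of_notMem (hs' 1 (by decide)), Set.indicator_of_notMem (hs' 3 (by decide)), Set.indicator_of_notMem (ht' 0 (by decide)), Set.indicator_of_notMem (ht' 2 (by decide)), Set.indicator_of_notMem (ht' 3 (by decide)),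
      mul_zero, mul_one, zero_mul, one_mul, add_zero, zero_add, sub_zero, zero_sub,
      mul_neg, neg_mul, neg_neg, sub_self, neg_zero, Complex.ofReal_zero] at q11
    exact (by nlinarith : (1:ℝ) - r ≠ 0) (by exact_mod_cast q11)
  · have hsm : ω ∈ s 2 := hsi
    have htm : ω ∈ t 2 := htj
    simp only [Set.indicator_of_mem hsm, Set.indicator_of_mem htm,
      Set.indicator_of_notMem (hs' 0 (by decide)), Set.indicator_of_notMem (hs' 1 (by decide)), Set.indicator_of_notMem (hs' 3 (by decide)), Set.indicator_of_notMem (ht' 0 (by decide)), Set.indicator_of_notMem (ht' 1 (by decide)), Set.indicator_of_notMem (ht' 3 (by decide)),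
      mul_zero, mul_one, zero_mul, one_mul, add_zero, zero_add, sub_zero, zero_sub,
      mul_neg, neg_mul, neg_neg, sub_self, neg_zero, Complex.ofReal_zero] at q00
    have q := congrArg Complex.re q00
    simp only [Complex.add_re, Complex.mul_re, Complex.mul_im, Complex.sub_re, Complex.sub_im,
      Complex.one_re, Complex.one_im, Complex.zero_re, Complex.zero_im,
      Complex.ofReal_re, Complex.ofReal_im, Complex.conj_re, Complex.conj_im,
      Complex.neg_re, Complex.neg_im] at q
    nlinarith [sq_nonneg ((v ω).re * w), sq_nonneg ((v ω).im * w), hr0, hr1,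
      mul_pos hr0 hr0, mul_pos (by nlinarith : (0:ℝ) < 1 - r) (by nlinarith : (0:ℝ) < 1 - r)]
  · exact hij (by simp)
  · have hsm : ω ∈ s 3 := hsi
    have htm : ω ∈ t 0 := htj
    simp only [Set.indicator_of_mem hsm, Set.indicator_of_mem htm,
      Set.indicator_of_notMem (hs' 0 (by decide)), Set.indicator_of_notMem (hs' 1 (by decide)), Set.indicator_of_notMem (hs' 2 (by decide)), Set.indicator_of_notMem (ht' 1 (by decide)), Set.indicator_of_notMem (ht' 2 (by decide)), Set.indicator_of_notMem (ht' 3 (by decide)),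
      mul_zero, mul_one, zero_mul, one_mul, add_zero, zero_add, sub_zero, zero_sub,
      mul_neg, neg_mul, neg_neg, sub_self, neg_zero, Complex.ofReal_zero] at q00
    exact (by nlinarith : (1:ℝ) - r ≠ 0) (by exact_mod_cast q00)
  · have hsm : ω ∈ s 3 := hsi
    have htm : ω ∈ t 1 := htj
    simp only [Set.indicator_of_mem hsm, Set.indicator_of_mem htm,
      Set.indicator_of_notMem (hs' 0 (by decide)), Set.indicator_of_notMem (hs' 1 (by decide)), Set.indicator_of_notMem (hs' 2 (by decide)), Set.indicator_of_notMem (ht' 0 (by decide)), Set.indicator_of_notMem (ht' 2 (by decide)), Set.indicator_of_notMem (ht' 3 (by decide)),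
      mul_zero, mul_one, zero_mul, one_mul, add_zero, zero_add, sub_zero, zero_sub,
      mul_neg, neg_mul, neg_neg, sub_self, neg_zero, Complex.ofReal_zero] at q11
    exact hr0.ne' (by exact_mod_cast q11)
  · exact hij (by simp)
  · have hsm : ω ∈ s 3 := hsi
    have htm : ω ∈ t 3 := htj
    simp only [Set.indicator_of_mem hsm, Set.indicator_of_mem htm,
      Set.indicator_of_notMem (hs' 0 (by decide)), Set.indicator_of_notMem (hs' 1 (by decide)), Set.indicator_of_notMem (hs' 2 (by decide)), Set.indicator_of_notMem (ht' 0 (by decide)), Set.indicator_of_notMem (ht' 1 (by decide)), Set.indicator_of_notMem (ht' 2 (by decide)),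
      mul_zero, mul_one, zero_mul, one_mul, add_zero, zero_add, sub_zero, zero_sub,
      mul_neg, neg_mul, neg_neg, sub_self, neg_zero, Complex.ofReal_zero] at q00
    have q := congrArg Complex.re q00
    simp only [Complex.add_re, Complex.mul_re, Complex.mul_im, Complex.sub_re, Complex.sub_im,
      Complex.one_re, Complex.one_im, Complex.zero_re, Complex.zero_im,
      Complex.ofReal_re, Complex.ofReal_im, Complex.conj_re, Complex.conj_im,
      Complex.neg_re, Complex.neg_im] at q
    nlinarith [sq_nonneg ((v ω).re * w), sq_nonneg ((v ω).im * w), hr0, hr1,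
      mul_pos hr0 hr0, mul_pos (by nlinarith : (0:ℝ) < 1 - r) (by nlinarith : (0:ℝ) < 1 - r)]

end Nullity
section L2side
variable {Ω : Type u} [MeasurableSpace Ω] {ν : MeasureTheory.Measure Ω}

lemma integrable_mul (f g : Lp ℝ 2 ν) : Integrable (fun ω => f ω * g ω) ν := by
  have := MeasureTheory.L2.integrable_inner (𝕜 := ℝ) f g
  simpa [RCLike.inner_apply, starRingEnd_apply, mul_comm] using this

lemma integrable_ind_mul (f g : Lp ℝ 2 ν) {A : Set Ω} (hA : MeasurableSet A) :
    Integrable (fun ω => A.indicator (fun ω => f ω * g ω) ω) ν :=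
  (integrable_mul f g).indicator hA

lemma inner_pair_zero (f₁ g₁ f₂ g₂ : Lp ℝ 2 ν) {A B : Set Ω} (hA : MeasurableSet A)
    (hB : MeasurableSet B)
    (h : ∀ᵐ ω ∂ν, f₁ ω * g₁ ω + f₂ ω * g₂ ω = 0) :
    (inner ℝ (restrictL2 f₁ hA) (restrictL2 g₁ hB) : ℝ)
      + (inner ℝ (restrictL2 f₂ hA) (restrictL2 g₂ hB) : ℝ) = 0 := by
  rw [inner_restrictL2 _ _ hA hB, inner_restrictL2 _ _ hA hB,
    ← integral_add (integrable_ind_mul f₁ g₁ (hA.inter hB))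
      (integrable_ind_mul f₂ g₂ (hA.inter hB))]
  have hz : (fun ω => (A ∩ B).indicator (fun ω => f₁ ω * g₁ ω) ω
      + (A ∩ B).indicator (fun ω => f₂ ω * g₂ ω) ω) =ᵐ[ν] fun _ => (0:ℝ) := by
    filter_upwards [h] with ω hω
    by_cases hmem : ω ∈ A ∩ B <;>
      simp [Set.indicator_of_mem, Set.indicator_of_notMem, hmem, hω]
  rw [integral_congr_ae hz]
  simp

lemma inner_sq (f : Lp ℝ 2 ν) {A : Set Ω} (hA : MeasurableSet A) :
    (inner ℝ (restrictL2 f hA) (restrictL2 f hA) : ℝ) = ∫ ω in A, f ω ^ 2 ∂ν := by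
  rw [inner_restrictL2 _ _ hA hA, Set.inter_self, ← integral_indicator hA]
  refine integral_congr_ae (Filter.Eventually.of_forall fun ω => ?_)
  by_cases hmem : ω ∈ A <;>
    simp [Set.indicator_of_mem, Set.indicator_of_notMem, hmem, sq]

lemma sum_inner_sq (f g h : Lp ℝ 2 ν) {A : Set Ω} (hA : MeasurableSet A)
    (he : ∀ᵐ ω ∂ν, f ω ^ 2 + g ω ^ 2 = h ω ^ 2) :
    (inner ℝ (restrictL2 f hA) (restrictL2 f hA) : ℝ)
      + (inner ℝ (restrictL2 g hA) (restrictL2 g hA) : ℝ) = ∫ ω in A, h ω ^ 2 ∂ν := by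
  rw [inner_restrictL2 _ _ hA hA, inner_restrictL2 _ _ hA hA, Set.inter_self,
    ← integral_add (integrable_ind_mul f f hA) (integrable_ind_mul g g hA),
    ← integral_indicator hA]
  refine integral_congr_ae ?_
  filter_upwards [he] with ω hω
  by_cases hmem : ω ∈ A
  · simp only [Set.indicator_of_mem hmem]
    nlinarith [hω]
  · simp only [Set.indicator_of_notMem hmem, add_zero]

end L2side
theorem muQuad_finitely_additive_orthogonal
    (ν : MeasureTheory.Measure Ω) [SigmaFinite ν]
    (x v : Ω →ₘ[ν] ℂ)
    (hx : ∀ᵐ ω ∂ν, (x ω).im = 0 ∧ 0 ≤ (x ω).re ∧ (x ω).re ≤ 1)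
    (hrp : IsRangeProjectionM (1 : Ω →ₘ[ν] ℂ) (x * (1 - x)))
    (hv : v * star v = 1 ∧ star v * v = 1)
    (h₀ k₀ h₁ k₁ h₁₁ h₁₂ k₁₁ k₁₂ : Lp ℝ 2 ν)
    (e4 : ∀ᵐ ω ∂ν, h₁₁ ω + k₁₁ ω = h₀ ω)
    (e5 : ∀ᵐ ω ∂ν, h₁₂ ω + k₁₂ ω = k₀ ω)
    (e6 : ∀ᵐ ω ∂ν, (h₁₁ ω) ^ 2 + (h₁₂ ω) ^ 2 = (h₁ ω) ^ 2)
    (e7 : ∀ᵐ ω ∂ν, (k₁₁ ω) ^ 2 + (k₁₂ ω) ^ 2 = (k₁ ω) ^ 2)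
    (e8 : ∀ᵐ ω ∂ν, h₁₁ ω * k₁₁ ω + h₁₂ ω * k₁₂ ω = 0)
    (s t : Fin 4 → Set Ω)
    (hs : ∀ i, MeasurableSet (s i)) (ht : ∀ i, MeasurableSet (t i))
    (hsorth : Pairwise fun i j => ν (s i ∩ s j) = 0)
    (htorth : Pairwise fun i j => ν (t i ∩ t j) = 0)
    (horth : projQuad x v hs * projQuad x v ht = 0) :
    (inner ℝ (muQuad h₀ k₀ h₁₁ h₁₂ k₁₁ k₁₂ hs) (muQuad h₀ k₀ h₁₁ h₁₂ k₁₁ k₁₂ ht) : ℝ) = 0 ∧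
    muQuad h₀ k₀ h₁₁ h₁₂ k₁₁ k₁₂ (fun i => (hs i).union (ht i)) =
      muQuad h₀ k₀ h₁₁ h₁₂ k₁₁ k₁₂ hs + muQuad h₀ k₀ h₁₁ h₁₂ k₁₁ k₁₂ ht ∧
    ‖muQuad h₀ k₀ h₁₁ h₁₂ k₁₁ k₁₂ hs‖ ^ 2 =
      ∫ ω in s 0, (h₀ ω) ^ 2 ∂ν + ∫ ω in s 1, (k₀ ω) ^ 2 ∂ν +
        ∫ ω in s 2, (h₁ ω) ^ 2 ∂ν + ∫ ω in s 3, (k₁ ω) ^ 2 ∂ν := by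
  have key := nullity x v hx hrp hs ht hsorth htorth horth
  have n00 : ν (s 0 ∩ t 0) = 0 := key 0 0 (by decide)
  have n02 : ν (s 0 ∩ t 2) = 0 := key 0 2 (by decide)
  have n03 : ν (s 0 ∩ t 3) = 0 := key 0 3 (by decide)
  have n11 : ν (s 1 ∩ t 1) = 0 := key 1 1 (by decide)
  have n12 : ν (s 1 ∩ t 2) = 0 := key 1 2 (by decide)
  have n13 : ν (s 1 ∩ t 3) = 0 := key 1 3 (by decide)
  have n20 : ν (s 2 ∩ t 0) = 0 := key 2 0 (by decide)
  have n21 : ν (s 2 ∩ t 1) = 0 := key 2 1 (by decide)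
  have n22 : ν (s 2 ∩ t 2) = 0 := key 2 2 (by decide)
  have n30 : ν (s 3 ∩ t 0) = 0 := key 3 0 (by decide)
  have n31 : ν (s 3 ∩ t 1) = 0 := key 3 1 (by decide)
  have n33 : ν (s 3 ∩ t 3) = 0 := key 3 3 (by decide)
  refine ⟨?_, ?_, ?_⟩
  · -- orthogonality of μ values
    have expand : (inner ℝ (muQuad h₀ k₀ h₁₁ h₁₂ k₁₁ k₁₂ hs) (muQuad h₀ k₀ h₁₁ h₁₂ k₁₁ k₁₂ ht) : ℝ)
        = inner ℝ (restrictL2 h₀ (hs 0) + restrictL2 h₁₁ (hs 2) + restrictL2 k₁₁ (hs 3))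
            (restrictL2 h₀ (ht 0) + restrictL2 h₁₁ (ht 2) + restrictL2 k₁₁ (ht 3))
          + inner ℝ (restrictL2 k₀ (hs 1) + restrictL2 h₁₂ (hs 2) + restrictL2 k₁₂ (hs 3))
            (restrictL2 k₀ (ht 1) + restrictL2 h₁₂ (ht 2) + restrictL2 k₁₂ (ht 3)) := by
      rw [muQuad, muQuad, WithLp.prod_inner_apply]; rfl
    rw [expand]
    simp only [inner_add_left, inner_add_right]
    have z1 : (inner ℝ (restrictL2 h₀ (hs 0)) (restrictL2 h₀ (ht 0)) : ℝ) = 0 :=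
      inner_restrictL2_zero _ _ _ _ n00
    have z2 : (inner ℝ (restrictL2 h₀ (hs 0)) (restrictL2 h₁₁ (ht 2)) : ℝ) = 0 :=
      inner_restrictL2_zero _ _ _ _ n02
    have z3 : (inner ℝ (restrictL2 h₀ (hs 0)) (restrictL2 k₁₁ (ht 3)) : ℝ) = 0 :=
      inner_restrictL2_zero _ _ _ _ n03
    have z4 : (inner ℝ (restrictL2 h₁₁ (hs 2)) (restrictL2 h₀ (ht 0)) : ℝ) = 0 :=
      inner_restrictL2_zero _ _ _ _ n20
    have z5 : (inner ℝ (restrictL2 h₁₁ (hs 2)) (restrictL2 h₁₁ (ht 2)) : ℝ) = 0 :=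
      inner_restrictL2_zero _ _ _ _ n22
    have z6 : (inner ℝ (restrictL2 k₁₁ (hs 3)) (restrictL2 h₀ (ht 0)) : ℝ) = 0 :=
      inner_restrictL2_zero _ _ _ _ n30
    have z7 : (inner ℝ (restrictL2 k₁₁ (hs 3)) (restrictL2 k₁₁ (ht 3)) : ℝ) = 0 :=
      inner_restrictL2_zero _ _ _ _ n33
    have z8 : (inner ℝ (restrictL2 k₀ (hs 1)) (restrictL2 k₀ (ht 1)) : ℝ) = 0 :=
      inner_restrictL2_zero _ _ _ _ n11
    have z9 : (inner ℝ (restrictL2 k₀ (hs 1)) (restrictL2 h₁₂ (ht 2)) : ℝ) = 0 :=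
      inner_restrictL2_zero _ _ _ _ n12
    have z10 : (inner ℝ (restrictL2 k₀ (hs 1)) (restrictL2 k₁₂ (ht 3)) : ℝ) = 0 :=
      inner_restrictL2_zero _ _ _ _ n13
    have z11 : (inner ℝ (restrictL2 h₁₂ (hs 2)) (restrictL2 k₀ (ht 1)) : ℝ) = 0 :=
      inner_restrictL2_zero _ _ _ _ n21
    have z12 : (inner ℝ (restrictL2 h₁₂ (hs 2)) (restrictL2 h₁₂ (ht 2)) : ℝ) = 0 :=
      inner_restrictL2_zero _ _ _ _ n22
    have z13 : (inner ℝ (restrictL2 k₁₂ (hs 3)) (restrictL2 k₀ (ht 1)) : ℝ) = 0 :=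
      inner_restrictL2_zero _ _ _ _ n31
    have z14 : (inner ℝ (restrictL2 k₁₂ (hs 3)) (restrictL2 k₁₂ (ht 3)) : ℝ) = 0 :=
      inner_restrictL2_zero _ _ _ _ n33
    have g1 : (inner ℝ (restrictL2 h₁₁ (hs 2)) (restrictL2 k₁₁ (ht 3)) : ℝ)
        + (inner ℝ (restrictL2 h₁₂ (hs 2)) (restrictL2 k₁₂ (ht 3)) : ℝ) = 0 :=
      inner_pair_zero _ _ _ _ (hs 2) (ht 3) e8
    have g2 : (inner ℝ (restrictL2 k₁₁ (hs 3)) (restrictL2 h₁₁ (ht 2)) : ℝ)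
        + (inner ℝ (restrictL2 k₁₂ (hs 3)) (restrictL2 h₁₂ (ht 2)) : ℝ) = 0 :=
      inner_pair_zero _ _ _ _ (hs 3) (ht 2)
        (by filter_upwards [e8] with ω h; linear_combination h)
    linarith [z1, z2, z3, z4, z5, z6, z7, z8, z9, z10, z11, z12, z13, z14, g1, g2]
  · -- additivity
    have c1 : restrictL2 h₀ ((hs 0).union (ht 0)) + restrictL2 h₁₁ ((hs 2).union (ht 2))
          + restrictL2 k₁₁ ((hs 3).union (ht 3))
        = (restrictL2 h₀ (hs 0) + restrictL2 h₁₁ (hs 2) + restrictL2 k₁₁ (hs 3))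
          + (restrictL2 h₀ (ht 0) + restrictL2 h₁₁ (ht 2) + restrictL2 k₁₁ (ht 3)) := by
      rw [restrictL2_union h₀ (hs 0) (ht 0) n00, restrictL2_union h₁₁ (hs 2) (ht 2) n22,
        restrictL2_union k₁₁ (hs 3) (ht 3) n33]
      abel
    have c2 : restrictL2 k₀ ((hs 1).union (ht 1)) + restrictL2 h₁₂ ((hs 2).union (ht 2))
          + restrictL2 k₁₂ ((hs 3).union (ht 3))
        = (restrictL2 k₀ (hs 1) + restrictL2 h₁₂ (hs 2) + restrictL2 k₁₂ (hs 3))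
          + (restrictL2 k₀ (ht 1) + restrictL2 h₁₂ (ht 2) + restrictL2 k₁₂ (ht 3)) := by
      rw [restrictL2_union k₀ (hs 1) (ht 1) n11, restrictL2_union h₁₂ (hs 2) (ht 2) n22,
        restrictL2_union k₁₂ (hs 3) (ht 3) n33]
      abel
    simp only [muQuad]
    rw [WithLp.equiv_symm_apply, ← WithLp.toLp_add, Prod.mk_add_mk, c1, c2]
  · -- norm identity
    rw [← real_inner_self_eq_norm_sq]
    have expand : (inner ℝ (muQuad h₀ k₀ h₁₁ h₁₂ k₁₁ k₁₂ hs) (muQuad h₀ k₀ h₁₁ h₁₂ k₁₁ k₁₂ hs) : ℝ)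
        = inner ℝ (restrictL2 h₀ (hs 0) + restrictL2 h₁₁ (hs 2) + restrictL2 k₁₁ (hs 3))
            (restrictL2 h₀ (hs 0) + restrictL2 h₁₁ (hs 2) + restrictL2 k₁₁ (hs 3))
          + inner ℝ (restrictL2 k₀ (hs 1) + restrictL2 h₁₂ (hs 2) + restrictL2 k₁₂ (hs 3))
            (restrictL2 k₀ (hs 1) + restrictL2 h₁₂ (hs 2) + restrictL2 k₁₂ (hs 3)) := by
      rw [muQuad, WithLp.prod_inner_apply]; rfl
    rw [expand]
    simp only [inner_add_left, inner_add_right]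
    have m02 : ν (s 0 ∩ s 2) = 0 := hsorth (by decide)
    have m03 : ν (s 0 ∩ s 3) = 0 := hsorth (by decide)
    have m20 : ν (s 2 ∩ s 0) = 0 := hsorth (by decide)
    have m23 : ν (s 2 ∩ s 3) = 0 := hsorth (by decide)
    have m30 : ν (s 3 ∩ s 0) = 0 := hsorth (by decide)
    have m32 : ν (s 3 ∩ s 2) = 0 := hsorth (by decide)
    have m12 : ν (s 1 ∩ s 2) = 0 := hsorth (by decide)
    have m13 : ν (s 1 ∩ s 3) = 0 := hsorth (by decide)
    have m21 : ν (s 2 ∩ s 1) = 0 := hsorth (by decide)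
    have m31 : ν (s 3 ∩ s 1) = 0 := hsorth (by decide)
    have z1 : (inner ℝ (restrictL2 h₀ (hs 0)) (restrictL2 h₁₁ (hs 2)) : ℝ) = 0 :=
      inner_restrictL2_zero _ _ _ _ m02
    have z2 : (inner ℝ (restrictL2 h₀ (hs 0)) (restrictL2 k₁₁ (hs 3)) : ℝ) = 0 :=
      inner_restrictL2_zero _ _ _ _ m03
    have z3 : (inner ℝ (restrictL2 h₁₁ (hs 2)) (restrictL2 h₀ (hs 0)) : ℝ) = 0 :=
      inner_restrictL2_zero _ _ _ _ m20
    have z4 : (inner ℝ (restrictL2 h₁₁ (hs 2)) (restrictL2 k₁₁ (hs 3)) : ℝ) = 0 :=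
      inner_restrictL2_zero _ _ _ _ m23
    have z5 : (inner ℝ (restrictL2 k₁₁ (hs 3)) (restrictL2 h₀ (hs 0)) : ℝ) = 0 :=
      inner_restrictL2_zero _ _ _ _ m30
    have z6 : (inner ℝ (restrictL2 k₁₁ (hs 3)) (restrictL2 h₁₁ (hs 2)) : ℝ) = 0 :=
      inner_restrictL2_zero _ _ _ _ m32
    have z7 : (inner ℝ (restrictL2 k₀ (hs 1)) (restrictL2 h₁₂ (hs 2)) : ℝ) = 0 :=
      inner_restrictL2_zero _ _ _ _ m12
    have z8 : (inner ℝ (restrictL2 k₀ (hs 1)) (restrictL2 k₁₂ (hs 3)) : ℝ) = 0 :=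
      inner_restrictL2_zero _ _ _ _ m13
    have z9 : (inner ℝ (restrictL2 h₁₂ (hs 2)) (restrictL2 k₀ (hs 1)) : ℝ) = 0 :=
      inner_restrictL2_zero _ _ _ _ m21
    have z10 : (inner ℝ (restrictL2 h₁₂ (hs 2)) (restrictL2 k₁₂ (hs 3)) : ℝ) = 0 :=
      inner_restrictL2_zero _ _ _ _ m23
    have z11 : (inner ℝ (restrictL2 k₁₂ (hs 3)) (restrictL2 k₀ (hs 1)) : ℝ) = 0 :=
      inner_restrictL2_zero _ _ _ _ m31
    have z12 : (inner ℝ (restrictL2 k₁₂ (hs 3)) (restrictL2 h₁₂ (hs 2)) : ℝ) = 0 :=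
      inner_restrictL2_zero _ _ _ _ m32
    have d0 : (inner ℝ (restrictL2 h₀ (hs 0)) (restrictL2 h₀ (hs 0)) : ℝ)
        = ∫ ω in s 0, (h₀ ω) ^ 2 ∂ν := inner_sq h₀ (hs 0)
    have d1 : (inner ℝ (restrictL2 k₀ (hs 1)) (restrictL2 k₀ (hs 1)) : ℝ)
        = ∫ ω in s 1, (k₀ ω) ^ 2 ∂ν := inner_sq k₀ (hs 1)
    have d2 : (inner ℝ (restrictL2 h₁₁ (hs 2)) (restrictL2 h₁₁ (hs 2)) : ℝ)
        + (inner ℝ (restrictL2 h₁₂ (hs 2)) (restrictL2 h₁₂ (hs 2)) : ℝ)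
        = ∫ ω in s 2, (h₁ ω) ^ 2 ∂ν := sum_inner_sq h₁₁ h₁₂ h₁ (hs 2) e6
    have d3 : (inner ℝ (restrictL2 k₁₁ (hs 3)) (restrictL2 k₁₁ (hs 3)) : ℝ)
        + (inner ℝ (restrictL2 k₁₂ (hs 3)) (restrictL2 k₁₂ (hs 3)) : ℝ)
        = ∫ ω in s 3, (k₁ ω) ^ 2 ∂ν := sum_inner_sq k₁₁ k₁₂ k₁ (hs 3) e7
    linarith [z1, z2, z3, z4, z5, z6, z7, z8, z9, z10, z11, z12, d0, d1, d2, d3]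
end
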